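/- arXiv:2108.06041 — 11 statements merged into one kernel-verified Lean document; each statement's English description precedes it below -/
import Mathlib

section
/- Let S be an invertible p×p real matrix and X an m×p real matrix such that Xᵀ·X is invertible. Let k₀ be a real number, set β = 1 − k₀, and assume that (Xᵀ·X)⁻¹ + β·S⁻¹ and I_p + β·S⁻¹·Xᵀ·X are invertible. Then β·( S + k₀·((Xᵀ·X)⁻¹ + β·S⁻¹)⁻¹ ) = S − k₀·S·(I_p + β·S⁻¹·Xᵀ·X)⁻¹. -/
open Matrix

/-- The algebraic identity underlying the equality of the two closed forms (CGB2c)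
of the generalized Bayes covariance estimator for `m ≥ p`: with `β = 1 − k₀`,
`β (S + k₀ ((Xᵀ X)⁻¹ + β S⁻¹)⁻¹) = S − k₀ S (I_p + β S⁻¹ Xᵀ X)⁻¹`. -/
theorem stmt_3 {m p : ℕ} (S : Matrix (Fin p) (Fin p) ℝ) (X : Matrix (Fin m) (Fin p) ℝ)
    (k₀ β : ℝ) (hβ : β = 1 - k₀) (hS : IsUnit S.det) (hX : IsUnit (Xᵀ * X).det)
    (h1 : IsUnit ((Xᵀ * X)⁻¹ + β • S⁻¹).det)
    (h2 : IsUnit ((1 : Matrix (Fin p) (Fin p) ℝ) + β • (S⁻¹ * Xᵀ * X)).det) :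
    β • (S + k₀ • ((Xᵀ * X)⁻¹ + β • S⁻¹)⁻¹)
      = S - k₀ • (S * ((1 : Matrix (Fin p) (Fin p) ℝ) + β • (S⁻¹ * Xᵀ * X))⁻¹) := by
  set A := Xᵀ * X with hA
  set M := S + β • A with hMdef
  -- factorization 1
  have e1 : A⁻¹ + β • S⁻¹ = S⁻¹ * M * A⁻¹ := by
    rw [hMdef]
    rw [Matrix.mul_add, Matrix.add_mul, Matrix.mul_smul, Matrix.smul_mul,
      Matrix.nonsing_inv_mul S hS, Matrix.mul_assoc, Matrix.mul_nonsing_inv A hX, Matrix.one_mul,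
      Matrix.mul_one, add_comm]
  -- factorization 2
  have e2 : (1 : Matrix (Fin p) (Fin p) ℝ) + β • (S⁻¹ * Xᵀ * X) = S⁻¹ * M := by
    rw [hMdef, Matrix.mul_add, Matrix.mul_smul, Matrix.nonsing_inv_mul S hS, hA,
      Matrix.mul_assoc]
  -- M is invertible
  have hM : IsUnit M.det := by
    rw [e2, Matrix.det_mul] at h2
    exact (isUnit_of_mul_isUnit_right h2)
  have hMM : M * M⁻¹ = 1 := Matrix.mul_nonsing_inv M hM
  -- rewrite the two inverses
  have i1 : (A⁻¹ + β • S⁻¹)⁻¹ = A * (M⁻¹ * S) := by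
    rw [e1, Matrix.mul_inv_rev, Matrix.mul_inv_rev, Matrix.nonsing_inv_nonsing_inv A hX,
      Matrix.nonsing_inv_nonsing_inv S hS, Matrix.mul_assoc]
  have i2 : ((1 : Matrix (Fin p) (Fin p) ℝ) + β • (S⁻¹ * Xᵀ * X))⁻¹ = M⁻¹ * S := by
    rw [e2, Matrix.mul_inv_rev, Matrix.nonsing_inv_nonsing_inv S hS]
  rw [i1, i2]
  have e3 : S * (M⁻¹ * S) = S - β • (A * (M⁻¹ * S)) := by
    have hSM : S = M - β • A := by rw [hMdef]; abel
    calc S * (M⁻¹ * S) = (M - β • A) * (M⁻¹ * S) := by rw [← hSM]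
      _ = M * (M⁻¹ * S) - β • (A * (M⁻¹ * S)) := by
          rw [Matrix.sub_mul, Matrix.smul_mul]
      _ = S - β • (A * (M⁻¹ * S)) := by rw [← Matrix.mul_assoc, hMM, Matrix.one_mul]
  rw [e3, hβ]
  generalize (A * (M⁻¹ * S)) = T
  module
end

section
/- Let m, n, p be positive integers with p > m+1 and n ≥ p, and let α, β be positive reals satisfying α·(n−p+2m+1) ≤ 2·(p−m−1)·β. Then for all reals f₁ > f₂ > ⋯ > f_m > 0, setting g_i = 1/(1+β·f_i), the following holds for every index i: (n−p+2m−3)·f_i·α²·g_i² − 2·(p−m+1)·α·g_i + 4·α²·β·f_i²·g_i³ + 4·α·β·f_i·g_i² − 2·∑_{j≠i} (α²·f_i²·g_i² − α²·f_i·f_j·g_i·g_j + α·f_i·g_i − α·f_j·g_j)/(f_i − f_j) ≤ 0. -/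
/-!
With `u = α fᵢ gᵢ`, the identity `β f g = 1 - g` turns the diagonal part into
`α gᵢ (c u - 2(p-m-1) - 4 gᵢ (u + 1))` with `c = n-p+2m+1`, and the hypothesis on `α, β` gives
`c u ≤ c α / β ≤ 2(p-m-1)`. Since `f ↦ f / (1 + β f)` has difference quotients `gᵢ gⱼ`, each
summand of the off-diagonal sum equals `α (u + 1) gᵢ gⱼ ≥ 0`.
-/

section Shrinkage

variable {α β f f' g g' : ℝ}

lemma mul_mul_eq_one_sub_of_eq_one_div (hf : 1 + β * f ≠ 0) (hg : g = 1 / (1 + β * f)) :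
    β * f * g = 1 - g := by
  subst hg
  field_simp
  ring

lemma mul_sub_mul_eq_of_eq_one_div (hf : 1 + β * f ≠ 0) (hf' : 1 + β * f' ≠ 0)
    (hg : g = 1 / (1 + β * f)) (hg' : g' = 1 / (1 + β * f')) :
    f * g - f' * g' = (f - f') * (g * g') := by
  linear_combination (-(f * g)) * mul_mul_eq_one_sub_of_eq_one_div hf' hg'
    + (f' * g') * mul_mul_eq_one_sub_of_eq_one_div hf hg

lemma pair_term_nonneg (hα : 0 ≤ α) (hβ : 0 ≤ β) (hf : 0 ≤ f) (hf' : 0 ≤ f')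
    (hg : g = 1 / (1 + β * f)) (hg' : g' = 1 / (1 + β * f')) :
    0 ≤ (α ^ 2 * f ^ 2 * g ^ 2 - α ^ 2 * f * f' * g * g' + α * f * g - α * f' * g')
      / (f - f') := by
  have hdiff := mul_sub_mul_eq_of_eq_one_div (by positivity) (by positivity) hg hg'
  have hnum : α ^ 2 * f ^ 2 * g ^ 2 - α ^ 2 * f * f' * g * g' + α * f * g - α * f' * g'
      = α * (α * f * g + 1) * (g * g') * (f - f') := by
    linear_combination (α * (α * f * g + 1)) * hdiff
  rw [hnum]
  obtain hff' | hff' := eq_or_ne (f - f') 0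
  · simp [hff']
  · rw [mul_div_cancel_right₀ _ hff']
    subst hg hg'
    positivity

lemma diag_term_nonpos {c a : ℝ} (hα : 0 ≤ α) (hβ : 0 < β) (hf : 0 ≤ f) (hc : 0 ≤ c)
    (hαβ : α * c ≤ 2 * a * β) (hg : g = 1 / (1 + β * f)) :
    (c - 4) * f * α ^ 2 * g ^ 2 - 2 * (a + 2) * α * g
      + 4 * α ^ 2 * β * f ^ 2 * g ^ 3 + 4 * α * β * f * g ^ 2 ≤ 0 := by
  have hg0 : 0 < g := by rw [hg]; positivity
  have key := mul_mul_eq_one_sub_of_eq_one_div (by positivity) hg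
  have hu : c * (α * f * g) ≤ 2 * a := by
    refine le_of_mul_le_mul_right ?_ hβ
    calc c * (α * f * g) * β = c * α - c * α * g := by linear_combination c * α * key
      _ ≤ 2 * a * β := by nlinarith [mul_nonneg (mul_nonneg hc hα) hg0.le]
  have hfac : (c - 4) * f * α ^ 2 * g ^ 2 - 2 * (a + 2) * α * g
      + 4 * α ^ 2 * β * f ^ 2 * g ^ 3 + 4 * α * β * f * g ^ 2
      = α * g * (c * (α * f * g) - 2 * a - 4 * g * (α * f * g + 1)) := by
    linear_combination (4 * α ^ 2 * f * g ^ 2 + 4 * α * g) * key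
  rw [hfac]
  refine mul_nonpos_of_nonneg_of_nonpos (by positivity) ?_
  nlinarith [mul_nonneg hg0.le (by positivity : 0 ≤ α * f * g + 1)]

end Shrinkage

theorem stmt_7_general (m n p : ℕ) (hn : n ≥ p)
    (α β : ℝ) (hα : 0 < α) (hβ : 0 < β)
    (hαβ : α * ((n : ℝ) - p + 2 * m + 1) ≤ 2 * ((p : ℝ) - m - 1) * β)
    (f : Fin m → ℝ) (hfpos : ∀ i, 0 < f i)
    (g : Fin m → ℝ) (hg : ∀ i, g i = 1 / (1 + β * f i)) :
    ∀ i : Fin m,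
      ((n : ℝ) - p + 2 * m - 3) * f i * α ^ 2 * g i ^ 2
        - 2 * ((p : ℝ) - m + 1) * α * g i
        + 4 * α ^ 2 * β * f i ^ 2 * g i ^ 3
        + 4 * α * β * f i * g i ^ 2
        - 2 * ∑ j ∈ Finset.univ.erase i,
            (α ^ 2 * f i ^ 2 * g i ^ 2 - α ^ 2 * f i * f j * g i * g j
              + α * f i * g i - α * f j * g j) / (f i - f j) ≤ 0 := by
  intro i
  have hc : (0 : ℝ) ≤ n - p + 2 * m + 1 := by
    have : (p : ℝ) ≤ n := by exact_mod_cast hn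
    linarith [(m.cast_nonneg : (0 : ℝ) ≤ m)]
  have hdiag := diag_term_nonpos hα.le hβ (hfpos i).le hc hαβ (hg i)
  have hsum : 0 ≤ ∑ j ∈ Finset.univ.erase i,
      (α ^ 2 * f i ^ 2 * g i ^ 2 - α ^ 2 * f i * f j * g i * g j
        + α * f i * g i - α * f j * g j) / (f i - f j) :=
    Finset.sum_nonneg fun j _ =>
      pair_term_nonneg hα.le hβ.le (hfpos i).le (hfpos j).le (hg i) (hg j)
  linear_combination hdiag + 2 * hsum

/-- Theorem 4.1(i) (deterministic content): for `p > m+1`, `n ≥ p`, and positive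
`α, β` with `α(n−p+2m+1) ≤ 2(p−m−1)β`, each diagonal entry `φ*ᵢ` of the unbiased
estimate of the matrix-quadratic risk difference of the shrinkage estimator is
nonpositive. -/
theorem stmt_7 (m n p : ℕ) (hm : 0 < m) (hp : p > m + 1) (hn : n ≥ p)
    (α β : ℝ) (hα : 0 < α) (hβ : 0 < β)
    (hαβ : α * ((n : ℝ) - p + 2 * m + 1) ≤ 2 * ((p : ℝ) - m - 1) * β)
    (f : Fin m → ℝ) (hfpos : ∀ i, 0 < f i) (hfdec : ∀ i j : Fin m, i < j → f j < f i)
    (g : Fin m → ℝ) (hg : ∀ i, g i = 1 / (1 + β * f i)) :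
    ∀ i : Fin m,
      ((n : ℝ) - p + 2 * m - 3) * f i * α ^ 2 * g i ^ 2
        - 2 * ((p : ℝ) - m + 1) * α * g i
        + 4 * α ^ 2 * β * f i ^ 2 * g i ^ 3
        + 4 * α * β * f i * g i ^ 2
        - 2 * ∑ j ∈ Finset.univ.erase i,
            (α ^ 2 * f i ^ 2 * g i ^ 2 - α ^ 2 * f i * f j * g i * g j
              + α * f i * g i - α * f j * g j) / (f i - f j) ≤ 0 :=
  stmt_7_general m n p hn α β hα hβ hαβ f hfpos g hg
end

section
/- Let m, n, p be positive integers with |p−m| > 1 and n ≥ p, set ℓ = min(m,p), and let α, β be positive reals satisfying α·(n−p+2ℓ+1) ≤ 2·(|p−m|−1)·β. Then for all reals f₁ > f₂ > ⋯ > f_ℓ > 0, setting g_i = 1/(1+β·f_i), one has ∑_{i=1}^{ℓ} [ (n−p+2ℓ−3)·f_i·α²·g_i² − 2·(|p−m|+1)·α·g_i + 4·α²·β·f_i²·g_i³ + 4·α·β·f_i·g_i² ] − 2·∑_{i=1}^{ℓ} ∑_{j=i+1}^{ℓ} [ (α²·f_i²·g_i² − α²·f_j²·g_j²)/(f_i −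 f_j) + 2·(α·f_i·g_i − α·f_j·g_j)/(f_i − f_j) ] ≤ 0. -/
/-!
With `g = 1/(1+βf)` one has `βfg = 1 - g`, so each diagonal summand equals
`αg (αfg(N+1) - 2(c-1) - 4αfg² - 4g)` where `N = n-p+2ℓ` and `c = |p-m|`; the hypothesis on `α`
bounds `αfg(N+1)` by `2(c-1)βfg = 2(c-1)(1-g)`, which leaves `-2αg²(c+1+2αfg) ≤ 0`.
Each off-diagonal summand is a divided difference of `t ↦ (αt/(1+βt) + 1)²`, which is
increasing on `t ≥ 0`, so it is nonnegative.
-/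

open Set

lemma monotoneOn_div_one_add_mul {β : ℝ} (hβ : 0 ≤ β) :
    MonotoneOn (fun t => t / (1 + β * t)) (Ici 0) := by
  intro s hs t ht hst
  have hs' : (0 : ℝ) ≤ s := hs
  have ht' : (0 : ℝ) ≤ t := ht
  rw [div_le_div_iff₀ (by positivity) (by positivity)]
  nlinarith

lemma shrinkage_diag_term_nonpos {α β c N f : ℝ} (hα : 0 < α) (hβ : 0 ≤ β) (hc : 0 ≤ c)
    (hf : 0 ≤ f) (hαβ : α * (N + 1) ≤ 2 * (c - 1) * β) :
    (N - 3) * f * α ^ 2 * (1 / (1 + β * f)) ^ 2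
      - 2 * (c + 1) * α * (1 / (1 + β * f))
      + 4 * α ^ 2 * β * f ^ 2 * (1 / (1 + β * f)) ^ 3
      + 4 * α * β * f * (1 / (1 + β * f)) ^ 2 ≤ 0 := by
  set g := 1 / (1 + β * f) with hg
  have hg_pos : 0 < g := by positivity
  have hfg : β * f * g = 1 - g := by
    rw [hg]
    field_simp
    ring
  have hbound : α * (f * g) * (N + 1) ≤ 2 * (c - 1) * (1 - g) := by
    calc α * (f * g) * (N + 1) = f * g * (α * (N + 1)) := by ring
      _ ≤ f * g * (2 * (c - 1) * β) := by gcongr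
      _ = 2 * (c - 1) * (1 - g) := by rw [← hfg]; ring
  calc _ = α * g * (α * (f * g) * (N + 1) - 2 * (c - 1) - 4 * α * f * g ^ 2 - 4 * g) := by
        linear_combination (4 * α ^ 2 * f * g ^ 2 + 4 * α * g) * hfg
    _ ≤ α * g * (2 * (c - 1) * (1 - g) - 2 * (c - 1) - 4 * α * f * g ^ 2 - 4 * g) := by
        gcongr
    _ = -(2 * α * g ^ 2 * (c + 1 + 2 * α * f * g)) := by ring
    _ ≤ 0 := by
        rw [neg_nonpos]
        positivity

lemma shrinkage_cross_term_nonneg {α β a b : ℝ} (hα : 0 ≤ α) (hβ : 0 ≤ β)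
    (ha : 0 ≤ a) (hb : 0 ≤ b) :
    0 ≤ (α ^ 2 * a ^ 2 * (1 / (1 + β * a)) ^ 2 - α ^ 2 * b ^ 2 * (1 / (1 + β * b)) ^ 2) / (a - b)
      + 2 * (α * a * (1 / (1 + β * a)) - α * b * (1 / (1 + β * b))) / (a - b) := by
  have hmono : MonotoneOn (fun t => (α * (t / (1 + β * t)) + 1) ^ 2) (Ici 0) := by
    intro s hs t ht hst
    have hs' : (0 : ℝ) ≤ s := hs
    have h := monotoneOn_div_one_add_mul hβ hs ht hst
    dsimp only at h ⊢
    gcongr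
  have hslope := hmono.slope_nonneg (mem_Ici.2 hb) (mem_Ici.2 ha)
  rw [slope_def_field] at hslope
  rw [← add_div]
  refine hslope.trans_eq (congrArg (· / (a - b)) ?_)
  ring

theorem stmt_8_general (m n p ℓ : ℕ)
    (α β : ℝ) (hα : 0 < α) (hβ : 0 < β)
    (hαβ : α * ((n : ℝ) - p + 2 * ℓ + 1) ≤ 2 * (|(p : ℝ) - m| - 1) * β)
    (f : Fin ℓ → ℝ) (hfpos : ∀ i, 0 < f i)
    (g : Fin ℓ → ℝ) (hg : ∀ i, g i = 1 / (1 + β * f i)) :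
    (∑ i : Fin ℓ,
        (((n : ℝ) - p + 2 * ℓ - 3) * f i * α ^ 2 * g i ^ 2
          - 2 * (|(p : ℝ) - m| + 1) * α * g i
          + 4 * α ^ 2 * β * f i ^ 2 * g i ^ 3
          + 4 * α * β * f i * g i ^ 2))
      - 2 * ∑ i : Fin ℓ, ∑ j ∈ Finset.univ.filter (fun j => i < j),
          ((α ^ 2 * f i ^ 2 * g i ^ 2 - α ^ 2 * f j ^ 2 * g j ^ 2) / (f i - f j)
            + 2 * (α * f i * g i - α * f j * g j) / (f i - f j)) ≤ 0 := by
  obtain rfl : g = fun i => 1 / (1 + β * f i) := funext hg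
  have hdiag := Finset.sum_nonpos fun i (_ : i ∈ Finset.univ) =>
    shrinkage_diag_term_nonpos hα hβ.le (abs_nonneg _) (hfpos i).le hαβ
  have hcross := Finset.sum_nonneg fun i (_ : i ∈ Finset.univ) =>
    Finset.sum_nonneg fun j (_ : j ∈ Finset.univ.filter (fun j => i < j)) =>
      shrinkage_cross_term_nonneg hα.le hβ.le (hfpos i).le (hfpos j).le
  linarith

/-- Theorem 4.1(ii) (deterministic content): for `|p−m| > 1`, `n ≥ p`, `ℓ = min m p`,
and positive `α, β` with `α(n−p+2ℓ+1) ≤ 2(|p−m|−1)β`, the trace `tr(Φ*)` of the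
unbiased estimate of the scalar-quadratic risk difference of the shrinkage
estimator is nonpositive. -/
theorem stmt_8 (m n p ℓ : ℕ) (hm : 0 < m) (hp : 0 < p) (hℓ : ℓ = min m p)
    (hpm : |(p : ℝ) - m| > 1) (hn : n ≥ p)
    (α β : ℝ) (hα : 0 < α) (hβ : 0 < β)
    (hαβ : α * ((n : ℝ) - p + 2 * ℓ + 1) ≤ 2 * (|(p : ℝ) - m| - 1) * β)
    (f : Fin ℓ → ℝ) (hfpos : ∀ i, 0 < f i) (hfdec : ∀ i j : Fin ℓ, i < j → f j < f i)
    (g : Fin ℓ → ℝ) (hg : ∀ i, g i = 1 / (1 + β * f i)) :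
    (∑ i : Fin ℓ,
        (((n : ℝ) - p + 2 * ℓ - 3) * f i * α ^ 2 * g i ^ 2
          - 2 * (|(p : ℝ) - m| + 1) * α * g i
          + 4 * α ^ 2 * β * f i ^ 2 * g i ^ 3
          + 4 * α * β * f i * g i ^ 2))
      - 2 * ∑ i : Fin ℓ, ∑ j ∈ Finset.univ.filter (fun j => i < j),
          ((α ^ 2 * f i ^ 2 * g i ^ 2 - α ^ 2 * f j ^ 2 * g j ^ 2) / (f i - f j)
            + 2 * (α * f i * g i - α * f j * g j) / (f i - f j)) ≤ 0 :=
  stmt_8_general m n p ℓ α β hα hβ hαβ f hfpos g hg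
end

section
/- Let m, n, p be positive integers with p > m+1 and n ≥ p, and let a, c be reals with a > −2m−1 and −2 < c < a+p. Set k₀ = (a−c+m+p−1)/(a+2m+p), so that 0 < k₀ < 1. If k₀ ≤ 2(p−m−1)/(n+p−1), then for all reals f₁ > f₂ > ⋯ > f_m > 0, setting g_i = 1/(1+(1−k₀)·f_i), for every index i: (n−p+2m−3)·f_i·k₀²·g_i² − 2·(p−m+1)·k₀·g_i + 4·k₀²·(1−k₀)·f_i²·g_i³ + 4·k₀·(1−k₀)·f_i·g_i² − 2·∑_{j≠i} (k₀²·f_i²·g_i² − k₀²·f_i·f_j·g_i·g_j + k₀·f_i·g_i − k₀·f_j·g_j)/(f_i − f_j) ≤ 0. -/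
/-!
Write `β = 1 - k₀` and `t = k₀ fᵢ gᵢ`, so that `β fᵢ gᵢ = 1 - gᵢ`. The four diagonal terms factor as
`k₀ gᵢ (t (n - p + 2m + 1 - 4gᵢ) - 2(p - m - 1) - 4gᵢ)`, and `β t = k₀ (1 - gᵢ) ≤ k₀` turns the condition
`k₀ (n - p + 2m + 1) ≤ 2(p - m - 1) β` into `t (n - p + 2m + 1 - 4gᵢ) ≤ 2(p - m - 1)`, so the diagonal part is
negative. Since `x ↦ x / (1 + β x)` has divided differences `gᵢ gⱼ`, the `j`-th summand equals
`k₀ (t + 1) gᵢ gⱼ ≥ 0`, or `0` when `fⱼ = fᵢ` since `x / 0 = 0`.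
-/

lemma shrinkage_pos_and_lt_one {m p a c : ℝ} (hm : 1 ≤ m) (hp : 1 < p) (ha : -2 * m - 1 < a)
    (hc1 : -2 < c) (hc2 : c < a + p) :
    0 < (a - c + m + p - 1) / (a + 2 * m + p) ∧ (a - c + m + p - 1) / (a + 2 * m + p) < 1 := by
  have hden : 0 < a + 2 * m + p := by linarith
  exact ⟨div_pos (by linarith) hden, (div_lt_one hden).mpr (by linarith)⟩

lemma le_two_mul_div_iff {n p m k : ℝ} (hnp : 0 < n + p - 1) :
    k ≤ 2 * (p - m - 1) / (n + p - 1) ↔ k * (n - p + 2 * m + 1) ≤ 2 * (p - m - 1) * (1 - k) := by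
  rw [le_div_iff₀ hnp]
  constructor <;> intro h <;> linarith

lemma pos_and_mul_one_add_eq_one {β x g : ℝ} (hβ : 0 ≤ β) (hx : 0 ≤ x)
    (hg : g = 1 / (1 + β * x)) : 0 < g ∧ g * (1 + β * x) = 1 := by
  have hd : 0 < 1 + β * x := by nlinarith
  subst hg
  exact ⟨one_div_pos.mpr hd, one_div_mul_cancel hd.ne'⟩

lemma mul_sub_mul_eq_sub_mul_mul {β x y gx gy : ℝ} (hx : gx * (1 + β * x) = 1)
    (hy : gy * (1 + β * y) = 1) : x * gx - y * gy = (x - y) * (gx * gy) := by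
  linear_combination (y * gy) * hx - (x * gx) * hy

lemma mul_div_cancel_left_nonneg {α : Type*} [Field α] [LinearOrder α] [IsStrictOrderedRing α]
    (a : α) {b : α} (hb : 0 ≤ b) : 0 ≤ a * b / a := by
  rcases eq_or_ne a 0 with rfl | ha
  · simp
  · rwa [mul_div_cancel_left₀ _ ha]

lemma offDiagonal_term_nonneg {k x y gx gy : ℝ} (hk : 0 ≤ k) (hx : 0 ≤ x)
    (hgx : 0 ≤ gx) (hgy : 0 ≤ gy) (hx1 : gx * (1 + (1 - k) * x) = 1)
    (hy1 : gy * (1 + (1 - k) * y) = 1) :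
    0 ≤ (k ^ 2 * x ^ 2 * gx ^ 2 - k ^ 2 * x * y * gx * gy + k * x * gx - k * y * gy) / (x - y) := by
  have hnum : k ^ 2 * x ^ 2 * gx ^ 2 - k ^ 2 * x * y * gx * gy + k * x * gx - k * y * gy
      = (x - y) * (k * (k * x * gx + 1) * (gx * gy)) := by
    linear_combination k * (k * x * gx + 1) * mul_sub_mul_eq_sub_mul_mul hx1 hy1
  rw [hnum]
  exact mul_div_cancel_left_nonneg _ (by positivity)

section Diagonal

variable {n p m k x g : ℝ}

lemma mul_sub_four_mul_le (hk0 : 0 < k) (hk1 : k < 1) (hx : 0 ≤ x) (hg : 0 < g)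
    (hg1 : g * (1 + (1 - k) * x) = 1) (hpm : 0 ≤ p - m - 1)
    (hkey : k * (n - p + 2 * m + 1) ≤ 2 * (p - m - 1) * (1 - k)) :
    k * x * g * (n - p + 2 * m + 1 - 4 * g) ≤ 2 * (p - m - 1) := by
  have ht : 0 ≤ k * x * g := by positivity
  rcases le_or_gt (n - p + 2 * m + 1 - 4 * g) 0 with h | h
  · nlinarith [mul_nonpos_of_nonneg_of_nonpos ht h]
  · have hβt : k * x * g * (1 - k) = k * (1 - g) := by linear_combination k * hg1
    have hβt_le : k * x * g * (1 - k) ≤ k := by nlinarith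
    have := mul_le_mul_of_nonneg_right hβt_le h.le
    nlinarith

lemma diagonal_terms_nonpos (hk0 : 0 < k) (hk1 : k < 1) (hx : 0 ≤ x) (hg : 0 < g)
    (hg1 : g * (1 + (1 - k) * x) = 1) (hpm : 0 ≤ p - m - 1)
    (hkey : k * (n - p + 2 * m + 1) ≤ 2 * (p - m - 1) * (1 - k)) :
    (n - p + 2 * m - 3) * x * k ^ 2 * g ^ 2 - 2 * (p - m + 1) * k * g
      + 4 * k ^ 2 * (1 - k) * x ^ 2 * g ^ 3 + 4 * k * (1 - k) * x * g ^ 2 ≤ 0 := by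
  have hfactor : (n - p + 2 * m - 3) * x * k ^ 2 * g ^ 2 - 2 * (p - m + 1) * k * g
      + 4 * k ^ 2 * (1 - k) * x ^ 2 * g ^ 3 + 4 * k * (1 - k) * x * g ^ 2
      = k * g * (k * x * g * (n - p + 2 * m + 1 - 4 * g) - 2 * (p - m - 1) - 4 * g) := by
    linear_combination (4 * k ^ 2 * x * g ^ 2 + 4 * k * g) * hg1
  rw [hfactor]
  have := mul_sub_four_mul_le hk0 hk1 hx hg hg1 hpm hkey
  exact mul_nonpos_of_nonneg_of_nonpos (by positivity) (by linarith)

end Diagonal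

theorem stmt_9_general (m n p : ℕ) (hm : 0 < m) (hp : p > m + 1)
    (a c : ℝ) (ha : a > -2 * m - 1) (hc1 : -2 < c) (hc2 : c < a + p)
    (k₀ : ℝ) (hk₀ : k₀ = (a - c + m + p - 1) / (a + 2 * m + p))
    (hkcond : k₀ ≤ 2 * ((p : ℝ) - m - 1) / ((n : ℝ) + p - 1)) :
    (0 < k₀ ∧ k₀ < 1) ∧
    ∀ (f : Fin m → ℝ), (∀ i, 0 < f i) → (∀ i j : Fin m, i < j → f j < f i) →
      ∀ (g : Fin m → ℝ), (∀ i, g i = 1 / (1 + (1 - k₀) * f i)) →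
      ∀ i : Fin m,
        ((n : ℝ) - p + 2 * m - 3) * f i * k₀ ^ 2 * g i ^ 2
          - 2 * ((p : ℝ) - m + 1) * k₀ * g i
          + 4 * k₀ ^ 2 * (1 - k₀) * f i ^ 2 * g i ^ 3
          + 4 * k₀ * (1 - k₀) * f i * g i ^ 2
          - 2 * ∑ j ∈ Finset.univ.erase i,
              (k₀ ^ 2 * f i ^ 2 * g i ^ 2 - k₀ ^ 2 * f i * f j * g i * g j
                + k₀ * f i * g i - k₀ * f j * g j) / (f i - f j) ≤ 0 := by
  have hmR : (1 : ℝ) ≤ m := by exact_mod_cast hm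
  have hpR : (m : ℝ) + 2 ≤ p := by exact_mod_cast hp
  obtain ⟨hk0, hk1⟩ := hk₀ ▸ shrinkage_pos_and_lt_one hmR (by linarith) ha hc1 hc2
  refine ⟨⟨hk0, hk1⟩, fun f hf _ g hg i => ?_⟩
  have hgj j := pos_and_mul_one_add_eq_one (by linarith) (hf j).le (hg j)
  have hkey := (le_two_mul_div_iff (by linarith [n.cast_nonneg (α := ℝ)])).mp hkcond
  have hsum := Finset.sum_nonneg fun j (_ : j ∈ Finset.univ.erase i) =>
    offDiagonal_term_nonneg hk0.le (hf i).le (hgj i).1.le (hgj j).1.le (hgj i).2 (hgj j).2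
  linarith [diagonal_terms_nonpos hk0 hk1 (hf i).le (hgj i).1 (hgj i).2 (by linarith) hkey]

/-- Corollary 4.1(i) (deterministic content): for `p > m+1`, `n ≥ p`, `a > −2m−1`,
`−2 < c < a+p` and `k₀ = (a−c+m+p−1)/(a+2m+p)`, one has `0 < k₀ < 1`, and if
`k₀ ≤ 2(p−m−1)/(n+p−1)` then each diagonal entry of the unbiased estimate of the
matrix-quadratic risk difference of the generalized Bayes estimator is nonpositive. -/
theorem stmt_9 (m n p : ℕ) (hm : 0 < m) (hp : p > m + 1) (hn : n ≥ p)
    (a c : ℝ) (ha : a > -2 * m - 1) (hc1 : -2 < c) (hc2 : c < a + p)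
    (k₀ : ℝ) (hk₀ : k₀ = (a - c + m + p - 1) / (a + 2 * m + p))
    (hkcond : k₀ ≤ 2 * ((p : ℝ) - m - 1) / ((n : ℝ) + p - 1)) :
    (0 < k₀ ∧ k₀ < 1) ∧
    ∀ (f : Fin m → ℝ), (∀ i, 0 < f i) → (∀ i j : Fin m, i < j → f j < f i) →
      ∀ (g : Fin m → ℝ), (∀ i, g i = 1 / (1 + (1 - k₀) * f i)) →
      ∀ i : Fin m,
        ((n : ℝ) - p + 2 * m - 3) * f i * k₀ ^ 2 * g i ^ 2
          - 2 * ((p : ℝ) - m + 1) * k₀ * g i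
          + 4 * k₀ ^ 2 * (1 - k₀) * f i ^ 2 * g i ^ 3
          + 4 * k₀ * (1 - k₀) * f i * g i ^ 2
          - 2 * ∑ j ∈ Finset.univ.erase i,
              (k₀ ^ 2 * f i ^ 2 * g i ^ 2 - k₀ ^ 2 * f i * f j * g i * g j
                + k₀ * f i * g i - k₀ * f j * g j) / (f i - f j) ≤ 0 :=
  stmt_9_general m n p hm hp a c ha hc1 hc2 k₀ hk₀ hkcond
end

section
/- Let m, n, p be positive integers with |p−m| > 1 and n ≥ p, set ℓ = min(m,p), and let a, c be reals with a > −m−ℓ−1 and ℓ−m−2 < c < a+p. Set k₀ = (a−c+p+ℓ−1)/(a+m+p+ℓ), so that 0 < k₀ < 1. If k₀ ≤ 2(|p−m|−1)/(n−p+2ℓ+2|p−m|−1), then for all reals f₁ > f₂ > ⋯ > f_ℓ > 0, setting g_i = 1/(1+(1−k₀)·f_i), one has ∑_{i=1}^{ℓ} [ (n−p+2ℓ−3)·f_i·k₀²·g_i² − 2·(|p−m|+1)·k₀·g_i + 4·k₀²·(1−k₀)·f_i²·g_i³ + 4·k₀·(1−k₀)·f_i·g_i² ] − 2·∑_{i=1}^{ℓ}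 ∑_{j=i+1}^{ℓ} [ (k₀²·f_i²·g_i² − k₀²·f_j²·g_j²)/(f_i − f_j) + 2·(k₀·f_i·g_i − k₀·f_j·g_j)/(f_i − f_j) ] ≤ 0. -/
set_option maxHeartbeats 1600000 in
/-- Corollary 4.1(ii) (deterministic content): for `|p−m| > 1`, `n ≥ p`,
`ℓ = min m p`, `a > −m−ℓ−1`, `ℓ−m−2 < c < a+p` and `k₀ = (a−c+p+ℓ−1)/(a+m+p+ℓ)`,
one has `0 < k₀ < 1`, and if `k₀ ≤ 2(|p−m|−1)/(n−p+2ℓ+2|p−m|−1)` then the trace of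
the unbiased estimate of the scalar-quadratic risk difference of the generalized
Bayes estimator is nonpositive. -/
theorem stmt_10 (m n p ℓ : ℕ) (hm : 0 < m) (hp : 0 < p) (hℓ : ℓ = min m p)
    (hpm : |(p : ℝ) - m| > 1) (hn : n ≥ p)
    (a c : ℝ) (ha : a > -(m : ℝ) - ℓ - 1) (hc1 : (ℓ : ℝ) - m - 2 < c) (hc2 : c < a + p)
    (k₀ : ℝ) (hk₀ : k₀ = (a - c + p + ℓ - 1) / (a + m + p + ℓ))
    (hkcond : k₀ ≤ 2 * (|(p : ℝ) - m| - 1) / ((n : ℝ) - p + 2 * ℓ + 2 * |(p : ℝ) - m| - 1)) :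
    (0 < k₀ ∧ k₀ < 1) ∧
    ∀ (f : Fin ℓ → ℝ), (∀ i, 0 < f i) → (∀ i j : Fin ℓ, i < j → f j < f i) →
      ∀ (g : Fin ℓ → ℝ), (∀ i, g i = 1 / (1 + (1 - k₀) * f i)) →
      (∑ i : Fin ℓ,
          (((n : ℝ) - p + 2 * ℓ - 3) * f i * k₀ ^ 2 * g i ^ 2
            - 2 * (|(p : ℝ) - m| + 1) * k₀ * g i
            + 4 * k₀ ^ 2 * (1 - k₀) * f i ^ 2 * g i ^ 3
            + 4 * k₀ * (1 - k₀) * f i * g i ^ 2))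
        - 2 * ∑ i : Fin ℓ, ∑ j ∈ Finset.univ.filter (fun j => i < j),
            ((k₀ ^ 2 * f i ^ 2 * g i ^ 2 - k₀ ^ 2 * f j ^ 2 * g j ^ 2) / (f i - f j)
              + 2 * (k₀ * f i * g i - k₀ * f j * g j) / (f i - f j)) ≤ 0 := by
  have hℓn : 1 ≤ ℓ := by omega
  have hℓ1 : (1:ℝ) ≤ ℓ := by exact_mod_cast hℓn
  have hnp : (p:ℝ) ≤ n := by exact_mod_cast hn
  set D := |(p : ℝ) - (m : ℝ)| with hDdef
  have hd : 1 < D := hpm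
  have hmR : (0:ℝ) < m := by exact_mod_cast hm
  have hpR : (0:ℝ) < p := by exact_mod_cast hp
  have hden : 0 < a + m + p + ℓ := by linarith
  have hnum : 0 < a - c + p + ℓ - 1 := by linarith
  have hk0pos : 0 < k₀ := by rw [hk₀]; exact div_pos hnum hden
  have hk0lt : k₀ < 1 := by rw [hk₀, div_lt_one hden]; linarith
  have hβ : 0 < 1 - k₀ := by linarith
  refine ⟨⟨hk0pos, hk0lt⟩, ?_⟩
  intro f hf hmono g hg
  have hDc : 0 < (n:ℝ) - p + 2*ℓ + 2*D - 1 := by linarith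
  have hmul : k₀ * ((n:ℝ) - p + 2*ℓ + 2*D - 1) ≤ 2*(D-1) := by
    rw [le_div_iff₀ hDc] at hkcond; linarith
  have hkey : k₀ * ((n:ℝ) - p + 2*ℓ + 1) ≤ 2*(D-1)*(1-k₀) := by nlinarith [hmul]
  have key2 : ∀ N s : ℝ, k₀*(N+1) ≤ 2*(D-1)*(1-k₀) → 0 ≤ s → s ≤ 1 →
      (N-3)*k₀*s + 4*k₀*s^2 + 4*s*(1-k₀) - 2*(D+1)*(1-k₀) ≤ 0 := by
    intro N s h1 h2 h3
    nlinarith [mul_le_mul_of_nonneg_right h1 h2,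
      mul_nonneg (mul_nonneg hk0pos.le h2) (sub_nonneg.mpr h3),
      mul_nonneg (mul_nonneg hβ.le (by linarith : (0:ℝ) ≤ D+1)) (sub_nonneg.mpr h3)]
  have hS1 : ∑ i : Fin ℓ,
      (((n : ℝ) - p + 2 * ℓ - 3) * f i * k₀ ^ 2 * g i ^ 2
        - 2 * (D + 1) * k₀ * g i
        + 4 * k₀ ^ 2 * (1 - k₀) * f i ^ 2 * g i ^ 3
        + 4 * k₀ * (1 - k₀) * f i * g i ^ 2) ≤ 0 := by
    apply Finset.sum_nonpos
    intro i _
    have hfi := hf i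
    have hdi : 0 < 1 + (1-k₀)*f i := by nlinarith
    have hgi : g i = 1/(1+(1-k₀)*f i) := hg i
    have hgp : 0 < g i := by rw [hgi]; positivity
    have hgid : g i * (1 + (1-k₀)*f i) = 1 := by
      rw [hgi]; field_simp
    have hs1 : (1-k₀)*(f i)*(g i) ≤ 1 := by nlinarith
    have hs0 : 0 ≤ (1-k₀)*(f i)*(g i) := by positivity
    have hF := key2 ((n:ℝ) - p + 2*ℓ) ((1-k₀)*(f i)*(g i)) hkey hs0 hs1
    have h6 : (((n : ℝ) - p + 2 * ℓ - 3) * f i * k₀ ^ 2 * g i ^ 2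
        - 2 * (D + 1) * k₀ * g i
        + 4 * k₀ ^ 2 * (1 - k₀) * f i ^ 2 * g i ^ 3
        + 4 * k₀ * (1 - k₀) * f i * g i ^ 2) * (1 - k₀) ≤ 0 := by
      have hring : (((n : ℝ) - p + 2 * ℓ - 3) * f i * k₀ ^ 2 * g i ^ 2
          - 2 * (D + 1) * k₀ * g i
          + 4 * k₀ ^ 2 * (1 - k₀) * f i ^ 2 * g i ^ 3
          + 4 * k₀ * (1 - k₀) * f i * g i ^ 2) * (1 - k₀)
          = (k₀ * g i) * (((n:ℝ) - p + 2*ℓ - 3)*k₀*((1-k₀)*(f i)*(g i))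
            + 4*k₀*((1-k₀)*(f i)*(g i))^2
            + 4*((1-k₀)*(f i)*(g i))*(1-k₀) - 2*(D+1)*(1-k₀)) := by ring
      rw [hring]
      exact mul_nonpos_iff.mpr (Or.inl ⟨by positivity, hF⟩)
    rcases mul_nonpos_iff.mp h6 with ⟨h, h'⟩ | ⟨h, h'⟩
    · linarith
    · exact h
  have hS2 : (0:ℝ) ≤ ∑ i : Fin ℓ, ∑ j ∈ Finset.univ.filter (fun j => i < j),
      ((k₀ ^ 2 * f i ^ 2 * g i ^ 2 - k₀ ^ 2 * f j ^ 2 * g j ^ 2) / (f i - f j)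
        + 2 * (k₀ * f i * g i - k₀ * f j * g j) / (f i - f j)) := by
    apply Finset.sum_nonneg
    intro i _
    apply Finset.sum_nonneg
    intro j hj
    have hij : i < j := (Finset.mem_filter.mp hj).2
    have hfij : 0 < f i - f j := sub_pos.mpr (hmono i j hij)
    have hfi := hf i
    have hfj := hf j
    have hdi : 0 < 1 + (1-k₀)*f i := by nlinarith
    have hdj : 0 < 1 + (1-k₀)*f j := by nlinarith
    have hgpi : 0 < g i := by rw [hg i]; positivity
    have hgpj : 0 < g j := by rw [hg j]; positivity
    have hid : f i * g i - f j * g j = (f i - f j) * (g i * g j) := by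
      rw [hg i, hg j]
      field_simp
      ring
    have hmono' : f j * g j ≤ f i * g i := by nlinarith [mul_pos hfij (mul_pos hgpi hgpj)]
    have hhj : 0 ≤ f j * g j := by positivity
    have h1 : 0 ≤ k₀ ^ 2 * f i ^ 2 * g i ^ 2 - k₀ ^ 2 * f j ^ 2 * g j ^ 2 := by
      nlinarith [mul_nonneg (mul_nonneg (sq_nonneg k₀)
        (by linarith : (0:ℝ) ≤ f i * g i + f j * g j))
        (by linarith : (0:ℝ) ≤ f i * g i - f j * g j)]
    have h2 : 0 ≤ 2 * (k₀ * f i * g i - k₀ * f j * g j) := by nlinarith [hk0pos]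
    exact add_nonneg (div_nonneg h1 hfij.le) (div_nonneg h2 hfij.le)
  linarith [hS1, hS2]
end

section
/- Let a and n be real numbers with 0 < a < n, and let z be a real number with 0 < z ≤ 2·(n−a)/a. Then a·z ≤ n·log(1+z). -/
/-- The key scalar inequality from the proof of Theorem 4.2:
if `0 < a < n` and `0 < z ≤ 2(n−a)/a`, then `a z ≤ n log(1+z)`. -/
theorem stmt_11 (a n z : ℝ) (ha : 0 < a) (han : a < n) (hz : 0 < z)
    (hz2 : z ≤ 2 * (n - a) / a) : a * z ≤ n * Real.log (1 + z) := by
  have haz : a * z ≤ 2 * (n - a) := by rwa [le_div_iff₀' ha] at hz2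
  calc a * z ≤ n * (2 * z / (z + 2)) := by
        rw [mul_div_assoc', le_div_iff₀ (by positivity)]
        nlinarith
    _ ≤ n * Real.log (1 + z) :=
        mul_le_mul_of_nonneg_left (Real.le_log_one_add_of_nonneg hz.le) (ha.trans han).le
end

section
/- Let m, n, p be positive integers with p > m and n ≥ p, and let α, β be positive reals satisfying α·(n−p+m) ≤ 2·(p−m)·β. Then for all reals f₁ > f₂ > ⋯ > f_m > 0, setting g_i = 1/(1+β·f_i) and d_i = n−p+2i−1, one has (1/n)·∑_{i=1}^{m} [ d_i·α·f_i·g_i − 2·α·f_i·g_i² − 2·α·∑_{j=i+1}^{m} f_j·g_i·g_j − n·log(1 + α·f_i·g_i) ] ≤ 0. -/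
private lemma log_ge_pade {x : ℝ} (hx : 0 ≤ x) : 2 * x / (2 + x) ≤ Real.log (1 + x) := by
  set F : ℝ → ℝ := fun y => Real.log (1 + y) - 2 * y / (2 + y) with hF
  have hderiv : ∀ y : ℝ, 0 < y → HasDerivAt F (1 / (1 + y) - (2 * (2 + y) - 2 * y * 1) / (2 + y) ^ 2) y := by
    intro y hy
    have h1 : HasDerivAt (fun z : ℝ => 1 + z) 1 y := (hasDerivAt_id y).const_add 1
    have h2 : HasDerivAt (fun z : ℝ => Real.log (1 + z)) (1 / (1 + y)) y := by
      simpa using h1.log (by nlinarith)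
    have h3 : HasDerivAt (fun z : ℝ => 2 * z) 2 y := by
      simpa using (hasDerivAt_id y).const_mul 2
    have h4 : HasDerivAt (fun z : ℝ => 2 + z) 1 y := (hasDerivAt_id y).const_add 2
    have h5 : HasDerivAt (fun z : ℝ => 2 * z / (2 + z))
        ((2 * (2 + y) - 2 * y * 1) / (2 + y) ^ 2) y := h3.div h4 (by nlinarith)
    exact h2.sub h5
  have hmono : MonotoneOn F (Set.Ici 0) := by
    apply monotoneOn_of_deriv_nonneg (convex_Ici 0)
    · apply ContinuousOn.sub
      · apply ContinuousOn.log (by fun_prop)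
        intro y hy
        simp only [Set.mem_Ici] at hy
        nlinarith
      · apply ContinuousOn.div (by fun_prop) (by fun_prop)
        intro y hy
        simp only [Set.mem_Ici] at hy
        nlinarith
    · intro y hy
      rw [interior_Ici, Set.mem_Ioi] at hy
      exact ((hderiv y hy).differentiableAt).differentiableWithinAt
    · intro y hy
      rw [interior_Ici, Set.mem_Ioi] at hy
      rw [(hderiv y hy).deriv]
      rw [sub_nonneg, div_le_div_iff₀ (by nlinarith) (by nlinarith)]
      nlinarith [sq_nonneg y]
  have h0 : F 0 ≤ F x := hmono (by simp) (by simpa using hx) hx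
  have : F 0 = 0 := by simp [hF]
  rw [this] at h0
  simp only [hF] at h0
  linarith

/-- Theorem 4.2 (deterministic content): for `p > m`, `n ≥ p` and positive `α, β`
with `α(n−p+m) ≤ 2(p−m)β`, the unbiased estimate of the Stein-loss risk difference
of the covariance estimator `Σ̂^{G1}` is nonpositive. -/
theorem stmt_12 (m n p : ℕ) (hm : 0 < m) (hp : p > m) (hn : n ≥ p)
    (α β : ℝ) (hα : 0 < α) (hβ : 0 < β)
    (hαβ : α * ((n : ℝ) - p + m) ≤ 2 * ((p : ℝ) - m) * β)
    (f : Fin m → ℝ) (hfpos : ∀ i, 0 < f i) (hfdec : ∀ i j : Fin m, i < j → f j < f i)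
    (g : Fin m → ℝ) (hg : ∀ i, g i = 1 / (1 + β * f i))
    (d : Fin m → ℝ) (hd : ∀ i, d i = (n : ℝ) - p + 2 * ((i : ℕ) + 1) - 1) :
    (1 / (n : ℝ)) * ∑ i : Fin m,
        (d i * α * f i * g i - 2 * α * f i * g i ^ 2
          - 2 * α * ∑ j ∈ Finset.univ.filter (fun j => i < j), f j * g i * g j
          - n * Real.log (1 + α * f i * g i)) ≤ 0 := by
  classical
  have hmn : m < n := lt_of_lt_of_le hp hn
  have hpR : (m:ℝ) < p := by exact_mod_cast hp
  have hnpR : (p:ℝ) ≤ n := by exact_mod_cast hn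
  have hmR : (0:ℝ) < m := by exact_mod_cast hm
  have hnR : (0:ℝ) < n := by linarith
  have hNPM : (0:ℝ) < (n:ℝ) - p + m := by linarith
  -- basic facts about g
  have hden : ∀ i, 0 < 1 + β * f i := fun i => by nlinarith [hfpos i]
  have hgpos : ∀ i, 0 < g i := fun i => by rw [hg i]; exact one_div_pos.2 (hden i)
  have hglt : ∀ i, g i < 1 := fun i => by
    rw [hg i, div_lt_one (hden i)]; nlinarith [hfpos i]
  have hkey : ∀ i, g i * (1 + β * f i) = 1 := fun i => by
    rw [hg i, one_div, inv_mul_cancel₀ (hden i).ne']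
  -- the function t
  set t : Fin m → ℝ := fun i => α * (f i * g i) with ht_def
  have ht : ∀ i, t i = α * (f i * g i) := fun _ => rfl
  have htpos : ∀ i, 0 < t i := fun i => by
    rw [ht]; exact mul_pos hα (mul_pos (hfpos i) (hgpos i))
  have hβfg : ∀ i, β * (f i * g i) = 1 - g i := fun i => by
    linear_combination hkey i
  have htβ : ∀ i, t i * β ≤ α := fun i => by
    have h1 : t i * β = α * (1 - g i) := by rw [ht]; linear_combination α * hβfg i
    nlinarith [hgpos i]
  have htanti : Antitone t := by
    intro i j hij
    rcases eq_or_lt_of_le hij with rfl | h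
    · exact le_rfl
    · have hf := hfdec i j h
      have h1 := hden i
      have h2 := hden j
      have hlt : f j * g j < f i * g i := by
        rw [hg i, hg j, mul_one_div, mul_one_div, div_lt_div_iff₀ h2 h1]
        nlinarith [hfpos i, hfpos j]
      rw [ht, ht]
      nlinarith
  -- the log bound
  have hlog : ∀ i, ((n:ℝ) - p + m) * t i ≤ n * Real.log (1 + t i) := by
    intro i
    have h0 : (0:ℝ) ≤ t i := (htpos i).le
    have hpade := log_ge_pade h0
    have h2t : (0:ℝ) < 2 + t i := by linarith
    have h3 : ((n:ℝ) - p + m) * t i ≤ 2 * ((p:ℝ) - m) := by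
      have hb : ((n:ℝ) - p + m) * (t i * β) ≤ ((n:ℝ) - p + m) * α :=
        mul_le_mul_of_nonneg_left (htβ i) hNPM.le
      nlinarith
    have hc : ((n:ℝ) - p + m) * t i ≤ (n:ℝ) * (2 * t i / (2 + t i)) := by
      rw [← mul_div_assoc, le_div_iff₀ h2t]
      nlinarith [mul_le_mul_of_nonneg_right h3 h0]
    exact hc.trans (mul_le_mul_of_nonneg_left hpade hnR.le)
  -- termwise bound
  have termwise : ∀ i : Fin m,
      d i * α * f i * g i - 2 * α * f i * g i ^ 2
          - 2 * α * ∑ j ∈ Finset.univ.filter (fun j => i < j), f j * g i * g j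
          - n * Real.log (1 + α * f i * g i)
        ≤ (2 * ((i:ℕ):ℝ) + 1 - m) * t i - 2 * (g i * t i)
          - ∑ j ∈ Finset.univ.filter (fun j => i < j), 2 * (g i * t j) := by
    intro i
    have e2 : 2 * α * ∑ j ∈ Finset.univ.filter (fun j => i < j), f j * g i * g j
        = ∑ j ∈ Finset.univ.filter (fun j => i < j), 2 * (g i * t j) := by
      rw [Finset.mul_sum]
      exact Finset.sum_congr rfl fun j _ => by rw [ht]; ring
    have e3 : 1 + α * f i * g i = 1 + t i := by rw [ht]; ring
    have e4 : d i * α * f i * g i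
        = ((n:ℝ) - p + m) * t i + (2 * ((i:ℕ):ℝ) + 1 - m) * t i := by
      rw [hd i, ht]; push_cast; ring
    have e5 : 2 * α * f i * g i ^ 2 = 2 * (g i * t i) := by rw [ht]; ring
    rw [e2, e3, e4, e5]
    have := hlog i
    linarith
  -- the weight function A
  set A : Fin m → ℝ := fun j => (∑ i ∈ Finset.Iic j, (2 - 2 * g i)) - (1 + (m:ℝ)) with hA_def
  have hA : ∀ j, A j = (∑ i ∈ Finset.Iic j, (2 - 2 * g i)) - (1 + (m:ℝ)) := fun _ => rfl
  have hIio : ∀ j : Fin m, Finset.univ.filter (fun i => i < j) = Finset.Iio j := by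
    intro j; ext x; simp
  have hAalt : ∀ j : Fin m,
      A j = (2 * ((j:ℕ):ℝ) + 1 - m) - 2 * g j - ∑ i ∈ Finset.Iio j, 2 * g i := by
    intro j
    rw [hA, ← Finset.Iio_insert j, Finset.sum_insert (by simp)]
    have hcast : ∑ i ∈ Finset.Iio j, (2 - 2 * g i)
        = ((j:ℕ):ℝ) * 2 - ∑ i ∈ Finset.Iio j, 2 * g i := by
      rw [Finset.sum_sub_distrib, Finset.sum_const, Fin.card_Iio, nsmul_eq_mul]
    rw [hcast]; ring
  -- sum identity : ∑ bound = ∑ t j * A j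
  have hsum_eq : ∑ i : Fin m, ((2 * ((i:ℕ):ℝ) + 1 - m) * t i - 2 * (g i * t i)
          - ∑ j ∈ Finset.univ.filter (fun j => i < j), 2 * (g i * t j))
        = ∑ j : Fin m, t j * A j := by
    have swap : ∑ i : Fin m, ∑ j ∈ Finset.univ.filter (fun j => i < j), 2 * (g i * t j)
        = ∑ j : Fin m, ∑ i ∈ Finset.univ.filter (fun i => i < j), 2 * (g i * t j) := by
      simp_rw [Finset.sum_filter]
      exact Finset.sum_comm
    rw [Finset.sum_sub_distrib, swap, ← Finset.sum_sub_distrib]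
    apply Finset.sum_congr rfl
    intro j _
    rw [hAalt j, hIio j]
    have : ∑ i ∈ Finset.Iio j, 2 * (g i * t j) = (∑ i ∈ Finset.Iio j, 2 * g i) * t j := by
      rw [Finset.sum_mul]
      exact Finset.sum_congr rfl fun i _ => by ring
    rw [this]; ring
  -- A is monotone
  have hAmono : Monotone A := by
    intro j k hjk
    rw [hA, hA]
    have hsub : Finset.Iic j ⊆ Finset.Iic k := Finset.Iic_subset_Iic.2 hjk
    have hle := Finset.sum_le_sum_of_subset_of_nonneg hsub
      (fun i _ _ => by nlinarith [hglt i] : ∀ i ∈ Finset.Iic k, i ∉ Finset.Iic j → 0 ≤ 2 - 2 * g i)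
    linarith
  -- ∑ A ≤ 0
  have hAsum : ∑ j : Fin m, A j ≤ 0 := by
    have h1 : ∀ j : Fin m, A j ≤ 2 * ((j:ℕ):ℝ) + 1 - m := by
      intro j
      have hle : ∑ i ∈ Finset.Iic j, (2 - 2 * g i) ≤ ∑ i ∈ Finset.Iic j, (2:ℝ) :=
        Finset.sum_le_sum fun i _ => by nlinarith [hgpos i]
      rw [Finset.sum_const, Fin.card_Iic, nsmul_eq_mul] at hle
      rw [hA]
      push_cast at hle ⊢
      linarith
    have h2 : ∑ j : Fin m, (2 * ((j:ℕ):ℝ) + 1 - m) = 0 := by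
      have hid : ∑ j : Fin m, ((j:ℕ):ℝ) * 2 = (m:ℝ) * ((m:ℝ) - 1) := by
        rw [← Finset.sum_mul]
        have : ∑ j : Fin m, ((j:ℕ):ℝ) = ((∑ j ∈ Finset.range m, j : ℕ) : ℝ) := by
          rw [Fin.sum_univ_eq_sum_range (fun i => ((i:ℕ):ℝ)) m]
          push_cast; rfl
        rw [this]
        have := Finset.sum_range_id_mul_two m
        have hcast : ((∑ j ∈ Finset.range m, j : ℕ) : ℝ) * 2 = ((m * (m-1) : ℕ) : ℝ) := by
          exact_mod_cast congrArg (Nat.cast : ℕ → ℝ) this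
        rw [hcast, Nat.cast_mul, Nat.cast_sub hm]
        push_cast; ring
      have : ∑ j : Fin m, (2 * ((j:ℕ):ℝ) + 1 - m)
          = (∑ j : Fin m, ((j:ℕ):ℝ) * 2) + ∑ j : Fin m, (1 - (m:ℝ)) := by
        rw [← Finset.sum_add_distrib]
        exact Finset.sum_congr rfl fun j _ => by ring
      rw [this, hid, Finset.sum_const, nsmul_eq_mul]
      simp only [Finset.card_univ, Fintype.card_fin]
      ring
    calc ∑ j : Fin m, A j ≤ ∑ j : Fin m, (2 * ((j:ℕ):ℝ) + 1 - m) :=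
          Finset.sum_le_sum fun j _ => h1 j
      _ = 0 := h2
  -- Chebyshev
  have hvary : Antivary t A := htanti.antivary hAmono
  have hcheb := hvary.card_mul_sum_le_sum_mul_sum
  have htsum : (0:ℝ) ≤ ∑ j : Fin m, t j :=
    Finset.sum_nonneg fun j _ => (htpos j).le
  have hprod : (∑ j : Fin m, t j) * (∑ j : Fin m, A j) ≤ 0 :=
    mul_nonpos_iff.2 (Or.inl ⟨htsum, hAsum⟩)
  have hcard : (0:ℝ) < (Fintype.card (Fin m) : ℝ) := by
    simp only [Fintype.card_fin]; exact_mod_cast hm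
  have hta : ∑ j : Fin m, t j * A j ≤ 0 := by
    have hmm : (Fintype.card (Fin m) : ℝ) * (∑ j : Fin m, t j * A j)
        ≤ (Fintype.card (Fin m) : ℝ) * 0 := by
      rw [mul_zero]; exact hcheb.trans hprod
    exact le_of_mul_le_mul_left hmm hcard
  -- assembly
  have hfinal : ∑ i : Fin m,
      (d i * α * f i * g i - 2 * α * f i * g i ^ 2
        - 2 * α * ∑ j ∈ Finset.univ.filter (fun j => i < j), f j * g i * g j
        - n * Real.log (1 + α * f i * g i)) ≤ 0 := by
    calc ∑ i : Fin m,
        (d i * α * f i * g i - 2 * α * f i * g i ^ 2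
          - 2 * α * ∑ j ∈ Finset.univ.filter (fun j => i < j), f j * g i * g j
          - n * Real.log (1 + α * f i * g i))
        ≤ ∑ i : Fin m, ((2 * ((i:ℕ):ℝ) + 1 - m) * t i - 2 * (g i * t i)
          - ∑ j ∈ Finset.univ.filter (fun j => i < j), 2 * (g i * t j)) :=
          Finset.sum_le_sum fun i _ => termwise i
      _ = ∑ j : Fin m, t j * A j := hsum_eq
      _ ≤ 0 := hta
  have h1n : (0:ℝ) ≤ 1 / (n:ℝ) := by positivity
  exact mul_nonpos_iff.2 (Or.inl ⟨h1n, hfinal⟩)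
end

section
/- Let m, n, p be positive integers with p > m and n ≥ p, and let c be a real number satisfying max{−2, n·(n−p+m)/(n+p−m) − m − 1} < c < n − 2m. Set k₀ = (n − (m+c+1))/n, so that 0 < k₀ < 1. Then for all reals f₁ > f₂ > ⋯ > f_m > 0, setting g_i = 1/(1+(1−k₀)·f_i) and d_i = n−p+2i−1, one has (1/n)·∑_{i=1}^{m} [ d_i·k₀·f_i·g_i − 2·k₀·f_i·g_i² − 2·k₀·∑_{j=i+1}^{m} f_j·g_i·g_j − n·log(1 + k₀·f_i·g_i) ] ≤ 0. -/
/-!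
Put `t i = k₀ f i g i`, `r = (1 - k₀) / k₀` and `M = k₀ / (1 - k₀)`, so that `0 ≤ t i ≤ M`,
`g i = 1 - r t i` and `r M = 1`. In these variables the cross terms telescope against the
weights `d i`, and the sum becomes `(n-p-1) Σ t + r ((Σ t)² + Σ t²) - n Σ log (1 + t)`.
By Cauchy–Schwarz, `(Σ t)² ≤ m Σ t²`, it is at most `Σ φ (t i)` with
`φ t = (n-p-1) t + (m+1) r t² - n log (1 + t)`, a convex function vanishing at `0`; so it
suffices that `φ M ≤ 0`. As `r M = 1`, `φ M = (n-p+m) M - n log (1 + M)`, and the Padé bound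
`log (1 + M) ≥ 2M / (M + 2)` turns `φ M ≤ 0` into `k₀ (n+p-m) ≤ 2 (p-m)`, which is the lower
bound on `c`.
-/

open Real Finset

theorem two_mul_div_add_two_le_log_one_add {x : ℝ} (hx : 0 ≤ x) :
    2 * x / (x + 2) ≤ log (1 + x) := by
  rcases hx.eq_or_lt with rfl | hx0
  · simp
  have hsum := hasSum_log_one_add_inv (inv_pos.mpr hx0)
  rw [inv_inv] at hsum
  have hfirst := le_hasSum hsum 0 fun k _ => by positivity
  refine le_trans (le_of_eq ?_) hfirst
  norm_num
  field_simp
  ring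

theorem mul_log_one_add_le_mul_log_one_add {t M : ℝ} (ht : 0 ≤ t) (htM : t ≤ M) :
    t * log (1 + M) ≤ M * log (1 + t) := by
  rcases (ht.trans htM).eq_or_lt with rfl | hM
  · simp [le_antisymm htM ht]
  have hs0 : 0 ≤ t / M := by positivity
  have hs1 : t / M ≤ 1 := (div_le_one hM).mpr htM
  have hconc := strictConcaveOn_log_Ioi.concaveOn.2 (Set.mem_Ioi.mpr one_pos)
    (show (0:ℝ) < 1 + M by linarith) (sub_nonneg.mpr hs1) hs0 (sub_add_cancel 1 (t / M))
  have hpt : (1 - t / M) • (1:ℝ) + (t / M) • (1 + M) = 1 + t := by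
    simp only [smul_eq_mul]; field_simp; ring
  rw [hpt, smul_eq_mul, smul_eq_mul, log_one, mul_zero, zero_add] at hconc
  calc t * log (1 + M) = M * (t / M * log (1 + M)) := by field_simp
    _ ≤ M * log (1 + t) := by gcongr

theorem mul_add_mul_sq_le_mul_log_one_add {A B N M t : ℝ} (hB : 0 ≤ B) (hN : 0 ≤ N) (ht : 0 ≤ t)
    (htM : t ≤ M) (hM : A * M + B * M ^ 2 ≤ N * log (1 + M)) :
    A * t + B * t ^ 2 ≤ N * log (1 + t) := by
  rcases (ht.trans htM).eq_or_lt with rfl | hM0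
  · simp [le_antisymm htM ht]
  have hlog := mul_log_one_add_le_mul_log_one_add ht htM
  have : M * (A * t + B * t ^ 2) ≤ M * (N * log (1 + t)) := by
    nlinarith [mul_le_mul_of_nonneg_left hM ht, mul_le_mul_of_nonneg_left hlog hN,
      mul_le_mul_of_nonneg_left (mul_le_mul_of_nonneg_left htM ht) hB]
  exact le_of_mul_le_mul_left this hM0

theorem Finset.two_mul_sum_mul_sum_Ici {ι R : Type*} [LinearOrder ι] [Fintype ι]
    [LocallyFiniteOrderTop ι] [LocallyFiniteOrderBot ι] [CommSemiring R] (t : ι → R) :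
    2 * ∑ i, t i * ∑ j ∈ Ici i, t j = (∑ i, t i) ^ 2 + ∑ i, t i ^ 2 := by
  classical
  have hswap : ∑ i, t i * ∑ j ∈ Ici i, t j = ∑ i, t i * ∑ j ∈ Iic i, t j := by
    simp only [mul_sum]
    rw [sum_comm' (t' := univ) (s' := fun j => Iic j) (by simp)]
    exact sum_congr rfl fun _ _ => sum_congr rfl fun _ _ => mul_comm _ _
  have hsplit : ∀ i, ∑ j ∈ Ici i, t j + ∑ j ∈ Iic i, t j = ∑ j, t j + t i := by
    intro i
    rw [← sum_filter_add_sum_filter_not univ (i ≤ ·), filter_le_eq_Ici]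
    simp only [not_le, filter_gt_eq_Iio, ← Iio_insert, sum_insert notMem_Iio_self]
    ring
  calc 2 * ∑ i, t i * ∑ j ∈ Ici i, t j
      = ∑ i, t i * (∑ j ∈ Ici i, t j + ∑ j ∈ Iic i, t j) := by
        rw [two_mul]; nth_rw 2 [hswap]; simp only [mul_add, sum_add_distrib]
    _ = (∑ i, t i) ^ 2 + ∑ i, t i ^ 2 := by
        simp only [hsplit, mul_add, sum_add_distrib, ← sum_mul, sq]

theorem Fin.sum_sum_Ici {m : ℕ} {R : Type*} [CommSemiring R] (t : Fin m → R) :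
    ∑ i, ∑ j ∈ Ici i, t j = ∑ j : Fin m, ((j : ℕ) + 1) * t j := by
  rw [sum_comm' (t' := univ) (s' := fun j => Iic j) (by simp)]
  simp [Fin.card_Iic, nsmul_eq_mul]

theorem risk_sum_eq {m : ℕ} (t : Fin m → ℝ) (a r : ℝ) :
    ∑ i : Fin m, ((a + 2 * (i : ℕ)) * t i - 2 * (1 - r * t i) * ∑ j ∈ Ici i, t j)
      = (a - 2) * ∑ i, t i + r * ((∑ i, t i) ^ 2 + ∑ i, t i ^ 2) := by
  have h1 := Fin.sum_sum_Ici t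
  simp only [add_mul, one_mul, sum_add_distrib] at h1
  have h2 := Finset.two_mul_sum_mul_sum_Ici t
  simp only [add_mul, mul_sub, mul_one, sub_mul, sum_add_distrib, sum_sub_distrib, mul_assoc,
    ← mul_sum]
  linear_combination (-2) * h1 + r * h2

theorem risk_sum_le {m : ℕ} (t : Fin m → ℝ) {a r N M : ℝ} (hr : 0 ≤ r) (hN : 0 ≤ N)
    (ht : ∀ i, t i ∈ Set.Icc 0 M) (hM : a * M + (m + 1) * r * M ^ 2 ≤ N * log (1 + M)) :
    a * ∑ i, t i + r * ((∑ i, t i) ^ 2 + ∑ i, t i ^ 2) ≤ N * ∑ i, log (1 + t i) := by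
  have hcs : (∑ i, t i) ^ 2 ≤ m * ∑ i, t i ^ 2 := by
    simpa using sq_sum_le_card_mul_sum_sq (s := univ) (f := t)
  have hpointwise : ∑ i, (a * t i + (m + 1) * r * t i ^ 2) ≤ ∑ i, N * log (1 + t i) :=
    sum_le_sum fun i _ =>
      mul_add_mul_sq_le_mul_log_one_add (by positivity) hN (ht i).1 (ht i).2 hM
  simp only [sum_add_distrib, ← mul_sum] at hpointwise
  nlinarith [mul_le_mul_of_nonneg_left hcs hr]

theorem shrinkage_mem_Ioo {m n c k : ℝ} (hm : 1 ≤ m) (hn : 0 < n) (hc1 : -2 < c)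
    (hc2 : c < n - 2 * m) (hk : k = (n - (m + c + 1)) / n) : 0 < k ∧ k < 1 := by
  subst hk
  exact ⟨div_pos (by linarith) hn, (div_lt_one hn).mpr (by linarith)⟩

theorem risk_substitution {k f g : ℝ} (hk0 : 0 < k) (hk1 : k < 1) (hf : 0 ≤ f)
    (hg : g = 1 / (1 + (1 - k) * f)) :
    k * f * g ∈ Set.Icc 0 (k / (1 - k)) ∧ g = 1 - (1 - k) / k * (k * f * g) := by
  have hden : 0 < 1 + (1 - k) * f := by nlinarith
  subst hg
  refine ⟨⟨by positivity, ?_⟩, by field_simp; ring⟩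
  rw [mul_one_div, div_le_div_iff₀ hden (by linarith)]
  nlinarith

theorem shrinkage_mul_lt {m n p c k : ℝ} (hn : 0 < n) (hmp : m < p)
    (hc : n * (n - p + m) / (n + p - m) - m - 1 < c) (hk : k = (n - (m + c + 1)) / n) :
    k * (n + p - m) < 2 * (p - m) := by
  have hD : 0 < n + p - m := by linarith
  have h : n * (n - p + m) < (m + c + 1) * (n + p - m) := by
    rw [← div_lt_iff₀ hD]; linarith
  rw [hk, div_mul_eq_mul_div, div_lt_iff₀ hn]
  nlinarith

theorem risk_bound_at_endpoint {m n p k : ℝ} (hn : 0 ≤ n) (hk0 : 0 < k) (hk1 : k < 1)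
    (hkey : k * (n + p - m) ≤ 2 * (p - m)) :
    (n - p - 1) * (k / (1 - k)) + (m + 1) * ((1 - k) / k) * (k / (1 - k)) ^ 2
      ≤ n * log (1 + k / (1 - k)) := by
  have hM : 0 ≤ k / (1 - k) := div_nonneg hk0.le (by linarith)
  have hlhs : (n - p - 1) * (k / (1 - k)) + (m + 1) * ((1 - k) / k) * (k / (1 - k)) ^ 2
      = (n - p + m) * (k / (1 - k)) := by
    field_simp
    ring
  have hM2 : (n - p + m) * (k / (1 - k) + 2) ≤ 2 * n := by
    rw [div_add' _ _ _ (by linarith), mul_div_assoc', div_le_iff₀ (by linarith)]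
    linarith
  rw [hlhs]
  set M := k / (1 - k)
  calc (n - p + m) * M
      ≤ n * (2 * M / (M + 2)) := by
        rw [mul_div_assoc' n, le_div_iff₀ (by positivity)]
        nlinarith [mul_le_mul_of_nonneg_left hM2 hM]
    _ ≤ n * log (1 + M) := by
        gcongr
        exact two_mul_div_add_two_le_log_one_add hM

/-- Corollary 4.2 (deterministic content): for `p > m`, `n ≥ p` and
`max{−2, n(n−p+m)/(n+p−m) − m − 1} < c < n − 2m`, setting
`k₀ = (n − (m+c+1))/n`, one has `0 < k₀ < 1` and the unbiased estimate of the
Stein-loss risk difference of the generalized Bayes covariance estimator is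
nonpositive. -/
theorem stmt_13 (m n p : ℕ) (hm : 0 < m) (hp : p > m) (hn : n ≥ p)
    (c : ℝ)
    (hc1 : max (-2 : ℝ) ((n : ℝ) * ((n : ℝ) - p + m) / ((n : ℝ) + p - m) - m - 1) < c)
    (hc2 : c < (n : ℝ) - 2 * m)
    (k₀ : ℝ) (hk₀ : k₀ = ((n : ℝ) - (m + c + 1)) / n) :
    (0 < k₀ ∧ k₀ < 1) ∧
    ∀ (f : Fin m → ℝ), (∀ i, 0 < f i) → (∀ i j : Fin m, i < j → f j < f i) →
      ∀ (g : Fin m → ℝ), (∀ i, g i = 1 / (1 + (1 - k₀) * f i)) →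
      ∀ (d : Fin m → ℝ), (∀ i, d i = (n : ℝ) - p + 2 * ((i : ℕ) + 1) - 1) →
      (1 / (n : ℝ)) * ∑ i : Fin m,
          (d i * k₀ * f i * g i - 2 * k₀ * f i * g i ^ 2
            - 2 * k₀ * ∑ j ∈ Finset.univ.filter (fun j => i < j), f j * g i * g j
            - n * Real.log (1 + k₀ * f i * g i)) ≤ 0 := by
  have hn0 : (0 : ℝ) < n := by exact_mod_cast hm.trans (hp.trans_le hn)
  obtain ⟨hk0, hk1⟩ := shrinkage_mem_Ioo (by exact_mod_cast hm) hn0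
    ((le_max_left _ _).trans_lt hc1) hc2 hk₀
  have hkey := shrinkage_mul_lt hn0 (by exact_mod_cast hp) ((le_max_right _ _).trans_lt hc1) hk₀
  refine ⟨⟨hk0, hk1⟩, fun f hf _ g hg d hd => ?_⟩
  set t : Fin m → ℝ := fun i => k₀ * f i * g i
  have hsub := fun i => risk_substitution hk0 hk1 (hf i).le (hg i)
  have hsummand : ∀ i : Fin m, d i * k₀ * f i * g i - 2 * k₀ * f i * g i ^ 2
        - 2 * k₀ * ∑ j ∈ univ.filter (fun j => i < j), f j * g i * g j
        - n * log (1 + k₀ * f i * g i)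
      = ((n - p + 1 + 2 * (i : ℕ)) * t i - 2 * (1 - (1 - k₀) / k₀ * t i) * ∑ j ∈ Ici i, t j)
        - n * log (1 + t i) := fun i => by
    have hinner : k₀ * ∑ j ∈ Ioi i, f j * g i * g j = g i * ∑ j ∈ Ioi i, t j := by
      rw [mul_sum, mul_sum]
      exact sum_congr rfl fun j _ => by ring
    rw [← (hsub i).2, filter_lt_eq_Ioi, ← Ioi_insert, sum_insert notMem_Ioi_self, hd i]
    linear_combination (-2) * hinner
  rw [sum_congr rfl fun i _ => hsummand i, sum_sub_distrib, risk_sum_eq, ← mul_sum]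
  refine mul_nonpos_of_nonneg_of_nonpos (by positivity) (sub_nonpos.mpr ?_)
  exact risk_sum_le t (div_nonneg (by linarith) hk0.le) hn0.le (fun i => (hsub i).1)
    (by convert risk_bound_at_endpoint hn0.le hk0 hk1 hkey.le using 2; ring)
end

section
/- Let m, n, p be positive integers with m ≥ p and n ≥ p, and let α ∈ (0,1) and β > 0 be reals. Then there exist reals f₁ > f₂ > ⋯ > f_p > 0 such that, with g_i = 1/(1+β·f_i) and d_i = n−p+2i−1, (1/n)·∑_{i=1}^{p} [ −d_i·α·g_i − 2·α·β·f_i·g_i² − 2·α·β·∑_{j=i+1}^{p} f_j·g_i·g_j − n·log(1 − α·g_i) ] > 0. (Indeed, as all f_i → 0⁺ this quantity tends to p·[(1−α) − log(1−α) − 1], which is strictly positive.) -/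
/-!
At `f = 0` every `g_i` equals `1`, so the estimate reduces to
`(1/n) (-α ∑ d_i - n p log(1 - α)) = p (-α - log(1 - α))`, using `∑ d_i = n p`; this is positive
because `log x < x - 1` for `x ≠ 1`. The estimate is continuous at `f = 0`, so it stays positive
along the strictly decreasing positive configurations `f_i = t (p - i)` for small `t > 0`.
-/

open Filter Topology

noncomputable def riskDiffEstimate (n p : ℕ) (α β : ℝ) (f : Fin p → ℝ) : ℝ :=
  (1 / (n : ℝ)) * ∑ i : Fin p,
    (-(((n : ℝ) - p + 2 * ((i : ℕ) + 1) - 1)) * α * (1 / (1 + β * f i))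
      - 2 * α * β * f i * (1 / (1 + β * f i)) ^ 2
      - 2 * α * β * ∑ j ∈ Finset.univ.filter (fun j => i < j),
          f j * (1 / (1 + β * f i)) * (1 / (1 + β * f j))
      - n * Real.log (1 - α * (1 / (1 + β * f i))))

lemma sum_range_two_mul_add_one (p : ℕ) : ∑ i ∈ Finset.range p, (2 * (i : ℝ) + 1) = p ^ 2 := by
  induction p with
  | zero => simp
  | succ k ih => rw [Finset.sum_range_succ, ih]; push_cast; ring

lemma sum_degrees_of_freedom (n p : ℕ) :
    ∑ i : Fin p, ((n : ℝ) - p + 2 * ((i : ℕ) + 1) - 1) = n * p := by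
  rw [Fin.sum_univ_eq_sum_range (fun i => (n : ℝ) - p + 2 * ((i : ℕ) + 1) - 1)]
  have hsplit : ∀ i ∈ Finset.range p,
      (n : ℝ) - p + 2 * ((i : ℕ) + 1) - 1 = ((n : ℝ) - p) + (2 * (i : ℝ) + 1) :=
    fun _ _ => by ring
  rw [Finset.sum_congr rfl hsplit, Finset.sum_add_distrib, sum_range_two_mul_add_one,
    Finset.sum_const, Finset.card_range, nsmul_eq_mul]
  ring

lemma riskDiffEstimate_zero {n : ℕ} (hn : n ≠ 0) (p : ℕ) (α β : ℝ) :
    riskDiffEstimate n p α β 0 = p * (-α - Real.log (1 - α)) := by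
  have hsum := sum_degrees_of_freedom n p
  simp only [riskDiffEstimate, Pi.zero_apply, mul_zero, zero_mul, add_zero, div_one, mul_one,
    sub_zero, Finset.sum_const_zero, Finset.sum_sub_distrib, ← Finset.sum_mul,
    Finset.sum_neg_distrib, hsum, Finset.sum_const, Finset.card_univ, Fintype.card_fin,
    nsmul_eq_mul]
  field_simp

lemma continuousAt_riskDiffEstimate_smul (n p : ℕ) {α : ℝ} (hα : α ≠ 1) (β : ℝ)
    (c : Fin p → ℝ) : ContinuousAt (fun t : ℝ => riskDiffEstimate n p α β (t • c)) 0 := by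
  have hlog : 1 - α ≠ 0 := sub_ne_zero.mpr hα.symm
  refine continuousAt_const.mul (tendsto_finsetSum _ fun i _ => ?_)
  -- `fun_prop` has no rule for `Finset.sum`; it picks up the inner sum from this hypothesis.
  have hinner : ContinuousAt (fun t : ℝ => ∑ j ∈ Finset.univ.filter (fun j => i < j),
      (t • c) j * (1 / (1 + β * (t • c) i)) * (1 / (1 + β * (t • c) j))) 0 :=
    tendsto_finsetSum _ fun j _ => show ContinuousAt _ _ by fun_prop (disch := simp)
  show ContinuousAt _ _
  fun_prop (disch := simp [hlog])

lemma neg_sub_log_one_sub_pos {α : ℝ} (hα0 : α ≠ 0) (hα1 : α < 1) :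
    0 < -α - Real.log (1 - α) := by
  have := Real.log_lt_sub_one_of_pos (by linarith : 0 < 1 - α) (by simpa [sub_eq_self] using hα0)
  linarith

lemma eventually_riskDiffEstimate_smul_pos {n : ℕ} (hn : n ≠ 0) (p : ℕ) (hp : p ≠ 0)
    {α : ℝ} (hα0 : α ≠ 0) (hα1 : α < 1) (β : ℝ) (c : Fin p → ℝ) :
    ∀ᶠ t in 𝓝 (0 : ℝ), 0 < riskDiffEstimate n p α β (t • c) := by
  have hlim : 0 < riskDiffEstimate n p α β ((0 : ℝ) • c) := by
    rw [zero_smul, riskDiffEstimate_zero hn]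
    exact mul_pos (by positivity) (neg_sub_log_one_sub_pos hα0 hα1)
  exact (continuousAt_riskDiffEstimate_smul n p hα1.ne β c).eventually (lt_mem_nhds hlim)

theorem stmt_14_general (n p : ℕ) (hp : 0 < p) (hn : n ≥ p)
    (α β : ℝ) (hα0 : 0 < α) (hα1 : α < 1) :
    ∃ f : Fin p → ℝ, (∀ i j : Fin p, i < j → f j < f i) ∧ (∀ i, 0 < f i) ∧
      (1 / (n : ℝ)) * ∑ i : Fin p,
          (-(((n : ℝ) - p + 2 * ((i : ℕ) + 1) - 1)) * α * (1 / (1 + β * f i))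
            - 2 * α * β * f i * (1 / (1 + β * f i)) ^ 2
            - 2 * α * β * ∑ j ∈ Finset.univ.filter (fun j => i < j),
                f j * (1 / (1 + β * f i)) * (1 / (1 + β * f j))
            - n * Real.log (1 - α * (1 / (1 + β * f i)))) > 0 := by
  set c : Fin p → ℝ := fun i => (p : ℝ) - i
  have hc_pos : ∀ i, 0 < c i := fun i => sub_pos.mpr (by exact_mod_cast i.isLt)
  have hc_anti : ∀ i j : Fin p, i < j → c j < c i := fun i j hij => by
    simp only [c]; gcongr; exact_mod_cast hij
  have hpos := eventually_riskDiffEstimate_smul_pos (by omega : n ≠ 0) p hp.ne' hα0.ne' hα1 β c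
  obtain ⟨t, ht, ht_pos⟩ :=
    ((hpos.filter_mono nhdsWithin_le_nhds).and (self_mem_nhdsWithin (s := Set.Ioi 0))).exists
  refine ⟨t • c, fun i j hij => ?_, fun i => mul_pos ht_pos (hc_pos i), ht⟩
  exact mul_lt_mul_of_pos_left (hc_anti i j hij) ht_pos

/-- Proposition 4.1 (deterministic content): for `m ≥ p`, `n ≥ p`, `α ∈ (0,1)` and
`β > 0`, there exists an eigenvalue configuration `f₁ > ⋯ > f_p > 0` at which the
unbiased estimate of the Stein-loss risk difference of the estimator `Σ̂^{G2}` is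
strictly positive. -/
theorem stmt_14 (m n p : ℕ) (hp : 0 < p) (hmp : m ≥ p) (hn : n ≥ p)
    (α β : ℝ) (hα0 : 0 < α) (hα1 : α < 1) (hβ : 0 < β) :
    ∃ f : Fin p → ℝ, (∀ i j : Fin p, i < j → f j < f i) ∧ (∀ i, 0 < f i) ∧
      (1 / (n : ℝ)) * ∑ i : Fin p,
          (-(((n : ℝ) - p + 2 * ((i : ℕ) + 1) - 1)) * α * (1 / (1 + β * f i))
            - 2 * α * β * f i * (1 / (1 + β * f i)) ^ 2
            - 2 * α * β * ∑ j ∈ Finset.univ.filter (fun j => i < j),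
                f j * (1 / (1 + β * f i)) * (1 / (1 + β * f j))
            - n * Real.log (1 - α * (1 / (1 + β * f i)))) > 0 :=
  stmt_14_general n p hp hn α β hα0 hα1
end

section
/- Let m, n, p be positive integers with p > m+1 and n ≥ p, and let α, β be positive reals satisfying α·(n−p+2m+1) ≤ 2·(p−m−1)·β. Set A = n−p+2m−3, B = p−m+1, and d_i = n−p+2i−1. Then for all reals f₁ > f₂ > ⋯ > f_m > 0, setting g_i = 1/(1+β·f_i), one has ∑_{i=1}^{m} [ α·g_i·( 4·α·β·(f_i·g_i)² + (α·A + 4·β)·f_i·g_i − 2·B ) − 2·∑_{j≠i} α·g_i²·g_j·((α+β)·f_i + 1) ] + (m/n)·∑_{i=1}^{m} [ d_i·α·f_i·g_i − 2·α·f_i·g_i² − 2·α·∑_{j=i+1}^{m} f_j·g_i·g_j − n·log(1 + α·f_i·g_i) ] ≤ 0. -/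
/-!
Write `t = f g`, so that `β t = 1 - g`. In the first sum this turns each bracket into
`(α (A + 4) - 2 (B - 2) β) t - 4 α t g - 2 B g`, which is nonpositive because
`A + 4 = n - p + 2m + 1` and `B - 2 = p - m - 1`; the cross terms only decrease it.

In the second sum put `s_i = α f_i g_i ∈ [0, α/β]`. Since `g_i = 1 - (β/α) s_i`, the tail
sums `∑_{j>i} s_j` cancel the `i`-dependent part of the weights `d_i`, and the sum becomes
`(n - p - 1) S + (β/α) (S² + ∑ s_i²) - n ∑ log (1 + s_i)` with `S = ∑ s_i`.
Now `S² + ∑ s_i² ≤ (m + 1) (α/β) S` and `log (1 + x) ≥ 2x / (x + 2)`, so it suffices that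
`(n - p + m) (α/β + 2) ≤ 2n`, which is again the hypothesis on `α/β`.
-/

open Finset

theorem sq_sum_eq_sum_sq_add_two_mul_sum_filter_lt {ι R : Type*} [Fintype ι] [LinearOrder ι]
    [CommSemiring R] (s : ι → R) :
    (∑ i, s i) ^ 2 = ∑ i, s i ^ 2 + 2 * ∑ i, ∑ j ∈ univ.filter (i < ·), s i * s j := by
  have hsplit : ∀ i j, s i * s j = (if i = j then s i ^ 2 else 0)
      + ((if i < j then s i * s j else 0) + (if j < i then s j * s i else 0)) := by
    intro i j
    rcases lt_trichotomy i j with h | rfl | h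
    · simp [h, h.ne, h.not_gt]
    · simp [sq]
    · simp [h, h.ne', h.not_gt, mul_comm]
  rw [sq, sum_mul_sum, sum_congr rfl fun i _ => sum_congr rfl fun j _ => hsplit i j]
  simp only [sum_add_distrib, sum_ite_eq, mem_univ, if_true]
  rw [sum_comm (f := fun i j => if j < i then s j * s i else 0)]
  simp only [← sum_filter]
  ring

theorem Fin.sum_sum_filter_lt_eq_sum_val_mul {R : Type*} [CommSemiring R] {m : ℕ}
    (s : Fin m → R) :
    ∑ i, ∑ j ∈ univ.filter (i < ·), s j = ∑ j : Fin m, ((j : ℕ) : R) * s j := by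
  rw [sum_comm' (t' := univ) (s' := fun j => univ.filter (· < j)) (h := by simp)]
  simp [filter_gt_eq_Iio, Fin.card_Iio]

theorem sum_mul_sub_two_mul_sum_tail_eq {R : Type*} [CommRing R] {m : ℕ} (s g d : Fin m → R)
    (c r : R) (hg : ∀ i, g i = 1 - r * s i) (hd : ∀ i, d i = c + 2 * ((i : ℕ) + 1)) :
    ∑ i, (d i * s i - 2 * g i * (s i + ∑ j ∈ univ.filter (i < ·), s j))
      = c * ∑ i, s i + r * ((∑ i, s i) ^ 2 + ∑ i, s i ^ 2) := by
  have hterm : ∀ i, d i * s i - 2 * g i * (s i + ∑ j ∈ univ.filter (i < ·), s j)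
      = c * s i + 2 * ((i : ℕ) * s i) - 2 * ∑ j ∈ univ.filter (i < ·), s j
        + 2 * r * s i ^ 2 + 2 * r * ∑ j ∈ univ.filter (i < ·), s i * s j := by
    intro i
    rw [hd, hg, ← mul_sum]
    ring
  simp only [hterm, sum_add_distrib, sum_sub_distrib, ← mul_sum,
    Fin.sum_sum_filter_lt_eq_sum_val_mul, sq_sum_eq_sum_sq_add_two_mul_sum_filter_lt]
  ring

theorem sq_sum_add_sum_sq_le {ι : Type*} [Fintype ι] {s : ι → ℝ} {M : ℝ}
    (hs₀ : ∀ i, 0 ≤ s i) (hsM : ∀ i, s i ≤ M) :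
    (∑ i, s i) ^ 2 + ∑ i, s i ^ 2 ≤ (Fintype.card ι + 1) * M * ∑ i, s i := by
  have hS : 0 ≤ ∑ i, s i := sum_nonneg fun i _ => hs₀ i
  have hSM : ∑ i, s i ≤ Fintype.card ι * M := by
    simpa using sum_le_sum fun i (_ : i ∈ univ) => hsM i
  have hsq : ∑ i, s i ^ 2 ≤ M * ∑ i, s i := by
    rw [mul_sum]
    exact sum_le_sum fun i _ => by rw [sq]; exact mul_le_mul_of_nonneg_right (hsM i) (hs₀ i)
  nlinarith [mul_le_mul_of_nonneg_right hSM hS]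

theorem two_mul_sum_div_le_sum_log_one_add {ι : Type*} [Fintype ι] {s : ι → ℝ} {M : ℝ}
    (hs₀ : ∀ i, 0 ≤ s i) (hsM : ∀ i, s i ≤ M) :
    2 * (∑ i, s i) / (M + 2) ≤ ∑ i, Real.log (1 + s i) := by
  rw [mul_sum, sum_div]
  refine sum_le_sum fun i _ => (div_le_div_of_nonneg_left ?_ ?_ ?_).trans
    (Real.le_log_one_add_of_nonneg (hs₀ i))
  · linarith [hs₀ i]
  · linarith [hs₀ i]
  · linarith [hsM i]

theorem linear_add_quadratic_le_mul_sum_log_one_add {ι : Type*} [Fintype ι] {s : ι → ℝ}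
    {M c r N : ℝ} (hs₀ : ∀ i, 0 ≤ s i) (hsM : ∀ i, s i ≤ M) (hM : 0 ≤ M)
    (hr : 0 ≤ r) (hrM : r * M ≤ 1) (hN : 0 ≤ N)
    (hc : (c + Fintype.card ι + 1) * (M + 2) ≤ 2 * N) :
    c * ∑ i, s i + r * ((∑ i, s i) ^ 2 + ∑ i, s i ^ 2) ≤ N * ∑ i, Real.log (1 + s i) := by
  have hS : 0 ≤ ∑ i, s i := sum_nonneg fun i _ => hs₀ i
  have hkS : 0 ≤ (Fintype.card ι + 1) * ∑ i, s i := by positivity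
  calc c * ∑ i, s i + r * ((∑ i, s i) ^ 2 + ∑ i, s i ^ 2)
      ≤ c * ∑ i, s i + r * ((Fintype.card ι + 1) * M * ∑ i, s i) := by
        gcongr; exact sq_sum_add_sum_sq_le hs₀ hsM
    _ ≤ (c + Fintype.card ι + 1) * ∑ i, s i := by
        nlinarith [mul_le_mul_of_nonneg_right hrM hkS]
    _ ≤ N * (2 * (∑ i, s i) / (M + 2)) := by
        rw [mul_div_assoc', le_div_iff₀ (by positivity)]
        nlinarith [mul_le_mul_of_nonneg_right hc hS]
    _ ≤ N * ∑ i, Real.log (1 + s i) := by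
        gcongr; exact two_mul_sum_div_le_sum_log_one_add hs₀ hsM

theorem shrinkage_term_nonpos {α β f g A B : ℝ} (hα : 0 ≤ α) (hf : 0 ≤ f) (hg : 0 ≤ g)
    (hfg : β * f * g = 1 - g) (hB : 0 ≤ B) (hαβ : α * (A + 4) ≤ 2 * (B - 2) * β) :
    α * g * (4 * α * β * (f * g) ^ 2 + (α * A + 4 * β) * (f * g) - 2 * B) ≤ 0 := by
  have hfg₀ : 0 ≤ f * g := mul_nonneg hf hg
  have hsplit : 4 * α * β * (f * g) ^ 2 + (α * A + 4 * β) * (f * g) - 2 * B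
      = (α * (A + 4) - 2 * (B - 2) * β) * (f * g) - 4 * α * (f * g) * g - 2 * B * g := by
    linear_combination (4 * α * (f * g) + 2 * B) * hfg
  refine mul_nonpos_of_nonneg_of_nonpos (mul_nonneg hα hg) ?_
  rw [hsplit]
  have := mul_nonpos_of_nonpos_of_nonneg (sub_nonpos.2 hαβ) hfg₀
  have : 0 ≤ α * (f * g) * g := by positivity
  have : 0 ≤ B * g := mul_nonneg hB hg
  linarith

theorem sum_shrinkage_terms_nonpos {ι : Type*} [Fintype ι] [DecidableEq ι]
    {α β A B : ℝ} {f g : ι → ℝ} (hα : 0 ≤ α) (hβ : 0 ≤ β) (hf : ∀ i, 0 ≤ f i)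
    (hg : ∀ i, 0 ≤ g i) (hfg : ∀ i, β * f i * g i = 1 - g i) (hB : 0 ≤ B)
    (hαβ : α * (A + 4) ≤ 2 * (B - 2) * β) :
    ∑ i, (α * g i * (4 * α * β * (f i * g i) ^ 2 + (α * A + 4 * β) * (f i * g i) - 2 * B)
      - 2 * ∑ j ∈ univ.erase i, α * g i ^ 2 * g j * ((α + β) * f i + 1)) ≤ 0 := by
  refine sum_nonpos fun i _ => sub_nonpos_of_le ?_
  have hcross : 0 ≤ ∑ j ∈ univ.erase i, α * g i ^ 2 * g j * ((α + β) * f i + 1) :=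
    sum_nonneg fun j _ => by have := hf i; have := hg j; positivity
  linarith [shrinkage_term_nonpos hα (hf i) (hg i) (hfg i) hB hαβ]

theorem sum_weighted_sub_sum_log_nonpos {m : ℕ} {α β c N : ℝ} {f g d : Fin m → ℝ}
    (hα : 0 < α) (hβ : 0 < β) (hf : ∀ i, 0 ≤ f i) (hg : ∀ i, 0 ≤ g i)
    (hfg : ∀ i, β * f i * g i = 1 - g i) (hd : ∀ i, d i = c + 2 * ((i : ℕ) + 1))
    (hN : 0 ≤ N) (hc : (c + m + 1) * (α / β + 2) ≤ 2 * N) :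
    ∑ i, (d i * α * f i * g i - 2 * α * f i * g i ^ 2
      - 2 * α * ∑ j ∈ univ.filter (i < ·), f j * g i * g j
      - N * Real.log (1 + α * f i * g i)) ≤ 0 := by
  set s : Fin m → ℝ := fun i => α * f i * g i with hs
  have hs₀ : ∀ i, 0 ≤ s i := fun i => by have := hf i; have := hg i; positivity
  have hsM : ∀ i, s i ≤ α / β := fun i => by
    rw [le_div_iff₀ hβ]
    nlinarith [hfg i, hg i]
  have hgs : ∀ i, g i = 1 - β / α * s i := fun i => by
    rw [hs]; field_simp; linarith [hfg i]
  have hrewrite : ∑ i, (d i * α * f i * g i - 2 * α * f i * g i ^ 2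
        - 2 * α * ∑ j ∈ univ.filter (i < ·), f j * g i * g j
        - N * Real.log (1 + α * f i * g i))
      = ∑ i, (d i * s i - 2 * g i * (s i + ∑ j ∈ univ.filter (i < ·), s j))
        - N * ∑ i, Real.log (1 + s i) := by
    rw [mul_sum, ← sum_sub_distrib]
    refine sum_congr rfl fun i _ => ?_
    have : α * ∑ j ∈ univ.filter (i < ·), f j * g i * g j
        = g i * ∑ j ∈ univ.filter (i < ·), s j := by
      rw [mul_sum, mul_sum]; exact sum_congr rfl fun j _ => by ring
    linear_combination -2 * this
  rw [hrewrite, sum_mul_sub_two_mul_sum_tail_eq s g d c (β / α) hgs hd, sub_nonpos]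
  exact linear_add_quadratic_le_mul_sum_log_one_add hs₀ hsM (by positivity) (by positivity)
    (le_of_eq (by field_simp)) hN (by rwa [Fintype.card_fin])

theorem stmt_15_general (m n p : ℕ) (hp : p > m + 1)
    (α β : ℝ) (hα : 0 < α) (hβ : 0 < β)
    (hαβ : α * ((n : ℝ) - p + 2 * m + 1) ≤ 2 * ((p : ℝ) - m - 1) * β)
    (A B : ℝ) (hA : A = (n : ℝ) - p + 2 * m - 3) (hB : B = (p : ℝ) - m + 1)
    (f : Fin m → ℝ) (hfpos : ∀ i, 0 < f i)
    (g : Fin m → ℝ) (hg : ∀ i, g i = 1 / (1 + β * f i))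
    (d : Fin m → ℝ) (hd : ∀ i, d i = (n : ℝ) - p + 2 * ((i : ℕ) + 1) - 1) :
    (∑ i : Fin m,
        (α * g i * (4 * α * β * (f i * g i) ^ 2 + (α * A + 4 * β) * (f i * g i) - 2 * B)
          - 2 * ∑ j ∈ Finset.univ.erase i, α * g i ^ 2 * g j * ((α + β) * f i + 1)))
      + ((m : ℝ) / n) * ∑ i : Fin m,
          (d i * α * f i * g i - 2 * α * f i * g i ^ 2
            - 2 * α * ∑ j ∈ Finset.univ.filter (fun j => i < j), f j * g i * g j
            - n * Real.log (1 + α * f i * g i)) ≤ 0 := by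
  have hpm : (m : ℝ) + 2 ≤ p := by exact_mod_cast hp
  have hf : ∀ i, 0 ≤ f i := fun i => (hfpos i).le
  have hg₀ : ∀ i, 0 ≤ g i := fun i => by rw [hg i]; have := hf i; positivity
  have hfg : ∀ i, β * f i * g i = 1 - g i := fun i => by
    have : 1 + β * f i ≠ 0 := by have := hf i; positivity
    rw [hg i]; field_simp; ring
  have hfirst := sum_shrinkage_terms_nonpos (A := A) (B := B) hα.le hβ.le hf hg₀ hfg
    (by rw [hB]; linarith) (by rw [hA, hB]; linarith)
  have hc : ((n - p - 1 : ℝ) + m + 1) * (α / β + 2) ≤ 2 * n := by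
    rw [div_add' _ _ _ hβ.ne', mul_div_assoc', div_le_iff₀ hβ]
    nlinarith
  have hd' : ∀ i, d i = (n - p - 1 : ℝ) + 2 * ((i : ℕ) + 1) := fun i => by rw [hd]; ring
  have hsecond := sum_weighted_sub_sum_log_nonpos hα hβ hf hg₀ hfg hd' n.cast_nonneg hc
  exact add_nonpos hfirst (mul_nonpos_of_nonneg_of_nonpos (by positivity) hsecond)

/-- Theorem 4.3 (deterministic content): for `p > m+1`, `n ≥ p` and positive `α, β`
with `α(n−p+2m+1) ≤ 2(p−m−1)β`, the unbiased estimate `2Δ̂` of (twice) the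
Kullback–Leibler risk difference of the pair `(Θ̂^G, Σ̂^{G1})` from `(X, S/n)`
is nonpositive. -/
theorem stmt_15 (m n p : ℕ) (hm : 0 < m) (hp : p > m + 1) (hn : n ≥ p)
    (α β : ℝ) (hα : 0 < α) (hβ : 0 < β)
    (hαβ : α * ((n : ℝ) - p + 2 * m + 1) ≤ 2 * ((p : ℝ) - m - 1) * β)
    (A B : ℝ) (hA : A = (n : ℝ) - p + 2 * m - 3) (hB : B = (p : ℝ) - m + 1)
    (f : Fin m → ℝ) (hfpos : ∀ i, 0 < f i) (hfdec : ∀ i j : Fin m, i < j → f j < f i)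
    (g : Fin m → ℝ) (hg : ∀ i, g i = 1 / (1 + β * f i))
    (d : Fin m → ℝ) (hd : ∀ i, d i = (n : ℝ) - p + 2 * ((i : ℕ) + 1) - 1) :
    (∑ i : Fin m,
        (α * g i * (4 * α * β * (f i * g i) ^ 2 + (α * A + 4 * β) * (f i * g i) - 2 * B)
          - 2 * ∑ j ∈ Finset.univ.erase i, α * g i ^ 2 * g j * ((α + β) * f i + 1)))
      + ((m : ℝ) / n) * ∑ i : Fin m,
          (d i * α * f i * g i - 2 * α * f i * g i ^ 2
            - 2 * α * ∑ j ∈ Finset.univ.filter (fun j => i < j), f j * g i * g j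
            - n * Real.log (1 + α * f i * g i)) ≤ 0 :=
  stmt_15_general m n p hp α β hα hβ hαβ A B hA hB f hfpos g hg d hd
end

section
/- Let m, n, p be positive integers with m ≥ p and n ≥ p, and let α ∈ (0,1) and β > 0 be reals satisfying (n+p+1)·α + m·α·β/(2·(1−α)) ≤ 2·(m−p−1)·β + 2·(m/n)·β. Set A = n+p−3, B = m−p+1, and d_i = n−p+2i−1. Then for all reals f₁ > f₂ > ⋯ > f_p > 0, setting g_i = 1/(1+β·f_i), one has ∑_{i=1}^{p} [ α·g_i·( 4·α·β·(f_i·g_i)² + (α·A + 4·β)·f_i·g_i − 2·B ) − 2·∑_{j≠i} α·g_i²·g_j·((α+β)·f_i + 1) ] + (m/n)·∑_{i=1}^{p} [ −d_i·α·g_i − 2·α·β·f_i·g_i² − 2·α·β·∑_{j=i+1}^{p} f_j·g_i·g_j − n·log(1 − α·g_i) ] ≤ 0. -/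
/-!
Since `g = 1 / (1 + βf)` satisfies `βfg = 1 - g`, every summand can be bounded in terms of `g`
alone. The cross terms are nonnegative and are dropped, and concavity of `log` gives
`log (1 - αg) ≥ g log (1 - α)`. The `dᵢ`-terms then leave `(m/n) α ∑ (p - 1 - 2i) gᵢ`, which is
nonpositive by Chebyshev's sum inequality because `g` increases with `i`. What remains is
`∑ gᵢ φ(1 - gᵢ)` with `φ` affine, and `φ ≤ 0` on `[0, 1]` is checked at the endpoints: at `g = 0`
the hypothesis on `α, β` is combined with `-log (1 - α) ≤ α + α² / (2(1 - α))`; at `g = 1` the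
same bound suffices unless `m/n > 2`, in which case `α ≤ 8/9` and a sharper bound on
`-log (1 - α)` takes over.
-/

open Real Finset

lemma neg_log_one_sub_le_of_one_le_mul_exp {a y : ℝ} (ha : a < 1) (h : 1 ≤ (1 - a) * exp y) :
    -log (1 - a) ≤ y := by
  have := Real.log_le_log one_pos h
  rw [log_one, log_mul (by linarith) (exp_ne_zero y), log_exp] at this
  linarith

lemma neg_log_one_sub_le {a : ℝ} (h0 : 0 ≤ a) (h1 : a < 1) :
    -log (1 - a) ≤ a + a ^ 2 / (2 * (1 - a)) := by
  have h1a : 0 < 1 - a := by linarith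
  set y := a + a ^ 2 / (2 * (1 - a))
  refine neg_log_one_sub_le_of_one_le_mul_exp h1 ?_
  calc 1 ≤ 1 + a ^ 4 / (8 * (1 - a)) := le_add_of_nonneg_right (by positivity)
    _ = (1 - a) * (1 + y + y ^ 2 / 2) := by simp only [y]; field_simp; ring
    _ ≤ (1 - a) * exp y := by gcongr; exact quadratic_le_exp_of_nonneg (by positivity)

lemma cubic_le_exp_of_nonneg {x : ℝ} (hx : 0 ≤ x) : 1 + x + x ^ 2 / 2 + x ^ 3 / 6 ≤ exp x := by
  have h := sum_le_exp_of_nonneg hx 4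
  norm_num [Finset.sum_range_succ, Nat.factorial] at h
  linarith

lemma neg_log_one_sub_le_of_le_eight_ninths {a : ℝ} (h0 : 0 ≤ a) (h1 : a ≤ 8 / 9) :
    -log (1 - a) ≤ a * (10 - 9 * a) / (6 * (1 - a)) := by
  have h1a : 0 < 1 - a := by linarith
  set y := a * (10 - 9 * a) / (6 * (1 - a))
  have hy : 0 ≤ y := div_nonneg (by nlinarith) (by positivity)
  refine neg_log_one_sub_le_of_one_le_mul_exp (by linarith) ?_
  have hb : 0 ≤ 8 - 9 * a := by linarith
  -- the excess is `a` times a polynomial in `8 - 9a ≥ 0` with positive values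
  calc 1 ≤ 1 + a * (224 + 208 * (8 - 9 * a) + 344 * (8 - 9 * a) ^ 2
          + (8 - 9 * a) ^ 3 * ((8 - 9 * a - 14) ^ 2 + 54)) / (104976 * (1 - a) ^ 2) :=
        le_add_of_nonneg_right (by positivity)
    _ = (1 - a) * (1 + y + y ^ 2 / 2 + y ^ 3 / 6) := by simp only [y]; field_simp; ring
    _ ≤ (1 - a) * exp y := by gcongr; exact cubic_le_exp_of_nonneg hy

lemma mul_log_one_sub_le_log_one_sub_mul {a t : ℝ} (ha : a < 1) (ht0 : 0 ≤ t) (ht1 : t ≤ 1) :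
    t * log (1 - a) ≤ log (1 - a * t) := by
  have h := strictConcaveOn_log_Ioi.concaveOn.2 (Set.mem_Ioi.2 one_pos)
    (Set.mem_Ioi.2 (sub_pos.2 ha)) (sub_nonneg.2 ht1) ht0 (sub_add_cancel 1 t)
  simp only [smul_eq_mul, log_one, mul_one] at h
  rwa [show 1 - t + t * (1 - a) = 1 - a * t by ring, mul_zero, zero_add] at h

lemma Monotone.sum_centered_index_mul_nonpos {p : ℕ} {g : Fin p → ℝ} (hg : Monotone g) :
    ∑ i : Fin p, ((p : ℝ) - 1 - 2 * (i : ℕ)) * g i ≤ 0 := by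
  set c : Fin p → ℝ := fun i => (p : ℝ) - 1 - 2 * (i : ℕ)
  have hc : Antitone c := fun i j hij => by
    simp only [c]; gcongr; exact_mod_cast hij
  have hsum : ∑ i, c i = 0 := by
    have hrev : ∀ i : Fin p, c (Fin.revPerm i) = - c i := fun i => by
      have := i.isLt
      simp only [c, Fin.revPerm_apply, Fin.val_rev]
      rw [Nat.cast_sub (by omega)]; push_cast; ring
    have := Equiv.sum_comp Fin.revPerm c
    simp only [hrev, sum_neg_distrib] at this
    linarith
  have := hc.antivary hg |>.card_mul_sum_le_sum_mul_sum
  rw [hsum, zero_mul, Fintype.card_fin] at this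
  rcases Nat.eq_zero_or_pos p with rfl | hp
  · simp
  · exact nonpos_of_mul_nonpos_right this (by exact_mod_cast hp)

lemma mean_term_le {α β f g A B S : ℝ} (hβ : β ≠ 0) (hf : 0 ≤ f) (hg : 0 ≤ g)
    (hfg : β * f * g = 1 - g) (hS : 0 ≤ S) :
    α * g * (4 * α * β * (f * g) ^ 2 + (α * A + 4 * β) * (f * g) - 2 * B) - 2 * S
      ≤ α * g * ((α * (A + 4) / β + 4) * (1 - g) - 2 * B) := by
  have e : α * (A + 4) / β * (1 - g) = α * (A + 4) * (f * g) := by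
    rw [← hfg]; field_simp
  have hr : 0 ≤ α ^ 2 * f * g ^ 3 := by positivity
  -- the gap between the two sides is `2S + 4α²fg³`
  linear_combination (4 * α * g + 4 * α ^ 2 * f * g ^ 2) * hfg - α * g * e + 2 * hS + 4 * hr

lemma cov_term_le {N α β f g d S : ℝ} (hN : 0 ≤ N) (hα0 : 0 ≤ α) (hα1 : α < 1) (hβ : 0 ≤ β)
    (hg0 : 0 ≤ g) (hg1 : g ≤ 1) (hfg : β * f * g = 1 - g) (hS : 0 ≤ S) :
    -d * α * g - 2 * α * β * f * g ^ 2 - 2 * α * β * S - N * log (1 - α * g)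
      ≤ α * (N - d) * g + N * g * (-log (1 - α) - α) - 2 * α * g * (1 - g) := by
  have hlog := mul_le_mul_of_nonneg_left (mul_log_one_sub_le_log_one_sub_mul hα1 hg0 hg1) hN
  have hS' : 0 ≤ α * β * S := by positivity
  linear_combination -2 * α * g * hfg + hlog + 2 * hS'

lemma mul_neg_log_one_sub_sub_le {M N P α : ℝ} (hP : 1 ≤ P) (hPM : P ≤ M) (hPN : P ≤ N)
    (hα0 : 0 < α) (hα1 : α < 1)
    (h : M * (α / (2 * (1 - α))) ≤ 2 * (M - P - 1) + 2 * (M / N)) :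
    M * (-log (1 - α) - α) ≤ 2 * α * (M - P + 1) := by
  have h1α : 0 < 1 - α := by linarith
  have hN : 0 < N := by linarith
  set s := α / (2 * (1 - α)) with hs_def
  rcases le_or_gt (M * s) (2 * (M - P + 1)) with hs | hs
  · have hL : -log (1 - α) - α ≤ α * s := by
      linarith [neg_log_one_sub_le hα0.le hα1, show α ^ 2 / (2 * (1 - α)) = α * s by ring]
    calc M * (-log (1 - α) - α) ≤ M * (α * s) := by gcongr; linarith
      _ = α * (M * s) := by ring
      _ ≤ α * (2 * (M - P + 1)) := by gcongr
      _ = 2 * α * (M - P + 1) := by ring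
  · -- then `M / N > 2`, which forces `s ≤ 4`, i.e. `α ≤ 8 / 9`
    have hMN : M / N * N = M := div_mul_cancel₀ M hN.ne'
    have hMN' : M / N ≤ M - 2 * N + 2 := by nlinarith
    have hs4 : s ≤ 4 := by nlinarith
    have hα : α ≤ 8 / 9 := by
      rw [hs_def, div_le_iff₀ (by positivity)] at hs4; linarith
    have hL : -log (1 - α) - α ≤ α * (s + 2) / 3 := by
      have := neg_log_one_sub_le_of_le_eight_ninths hα0.le hα
      rw [hs_def]; field_simp at this ⊢; linarith
    calc M * (-log (1 - α) - α) ≤ M * (α * (s + 2) / 3) := by gcongr; linarith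
      _ = α * (M * s + 2 * M) / 3 := by ring
      _ ≤ 2 * α * (M - P + 1) := by
        rw [div_le_iff₀ (by norm_num)]; nlinarith

lemma risk_bracket_nonpos {M N P α β t : ℝ} (hP : 1 ≤ P) (hPM : P ≤ M) (hPN : P ≤ N)
    (hα0 : 0 < α) (hα1 : α < 1) (hβ : 0 < β)
    (h : (N + P + 1) * α + M * α * β / (2 * (1 - α)) ≤ 2 * (M - P - 1) * β + 2 * (M / N) * β)
    (ht0 : 0 ≤ t) (ht1 : t ≤ 1) :
    α * ((α * (N + P + 1) / β + 4 - 2 * (M / N)) * t - 2 * (M - P + 1))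
      + M * (-log (1 - α) - α) ≤ 0 := by
  have h1α : 0 < 1 - α := by linarith
  set s := α / (2 * (1 - α)) with hs_def
  set X := α * (N + P + 1) / β
  have hX : 0 ≤ X := div_nonneg (mul_nonneg hα0.le (by linarith)) hβ.le
  have hs : X + M * s ≤ 2 * (M - P - 1) + 2 * (M / N) := by
    rw [← mul_le_mul_iff_of_pos_right hβ]
    calc (X + M * s) * β = (N + P + 1) * α + M * α * β / (2 * (1 - α)) := by
          simp only [X, hs_def]; field_simp
      _ ≤ _ := h
      _ = _ := by ring
  have hL : -log (1 - α) - α ≤ α * s := by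
    linarith [neg_log_one_sub_le hα0.le hα1, show α ^ 2 / (2 * (1 - α)) = α * s by ring]
  have hM : 0 ≤ M := by linarith
  have hat0 : α * (-2 * (M - P + 1)) + M * (-log (1 - α) - α) ≤ 0 := by
    linarith [mul_neg_log_one_sub_sub_le hP hPM hPN hα0 hα1 (by linarith)]
  have hat1 : α * (X + 4 - 2 * (M / N) - 2 * (M - P + 1)) + M * (-log (1 - α) - α) ≤ 0 := by
    nlinarith [mul_le_mul_of_nonneg_left hL hM, mul_le_mul_of_nonneg_left hs hα0.le]
  calc _ = (1 - t) * (α * (-2 * (M - P + 1)) + M * (-log (1 - α) - α))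
        + t * (α * (X + 4 - 2 * (M / N) - 2 * (M - P + 1)) + M * (-log (1 - α) - α)) := by ring
    _ ≤ 0 := add_nonpos (mul_nonpos_of_nonneg_of_nonpos (by linarith) hat0)
        (mul_nonpos_of_nonneg_of_nonpos ht0 hat1)

lemma risk_summand_le {M N P α β f g A B d S S' : ℝ} (hP : 1 ≤ P) (hPM : P ≤ M) (hPN : P ≤ N)
    (hα0 : 0 < α) (hα1 : α < 1) (hβ : 0 < β)
    (h : (N + P + 1) * α + M * α * β / (2 * (1 - α)) ≤ 2 * (M - P - 1) * β + 2 * (M / N) * β)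
    (hA : A = N + P - 3) (hB : B = M - P + 1) (hf : 0 < f) (hg : g = 1 / (1 + β * f))
    (hS : 0 ≤ S) (hS' : 0 ≤ S') :
    α * g * (4 * α * β * (f * g) ^ 2 + (α * A + 4 * β) * (f * g) - 2 * B) - 2 * S
      + M / N * (-d * α * g - 2 * α * β * f * g ^ 2 - 2 * α * β * S' - N * log (1 - α * g))
      ≤ M / N * α * ((N - d) * g) := by
  have hN : 0 < N := by linarith
  have hM : 0 < M := by linarith
  have hβf : 0 < 1 + β * f := by positivity
  have hg0 : 0 < g := by rw [hg]; positivity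
  have hg1 : g ≤ 1 := by rw [hg, div_le_one hβf]; nlinarith
  have hfg : β * f * g = 1 - g := by rw [hg]; field_simp; ring
  have h1 := mean_term_le (α := α) (A := A) (B := B) hβ.ne' hf.le hg0.le hfg hS
  have h2 := cov_term_le (d := d) hN.le hα0.le hα1 hβ.le hg0.le hg1 hfg hS'
  have h3 := risk_bracket_nonpos hP hPM hPN hα0 hα1 hβ h (sub_nonneg.2 hg1) (sub_le_self 1 hg0.le)
  calc _ ≤ α * g * ((α * (A + 4) / β + 4) * (1 - g) - 2 * B)
        + M / N * (α * (N - d) * g + N * g * (-log (1 - α) - α) - 2 * α * g * (1 - g)) :=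
        add_le_add h1 (by gcongr)
    _ = M / N * α * ((N - d) * g)
        + g * (α * ((α * (N + P + 1) / β + 4 - 2 * (M / N)) * (1 - g) - 2 * (M - P + 1))
          + M * (-log (1 - α) - α)) := by
      rw [hA, hB]; field_simp; ring
    _ ≤ _ := add_le_of_nonpos_right (mul_nonpos_of_nonneg_of_nonpos hg0.le h3)

/-- Theorem 4.4 (deterministic content): for `m ≥ p`, `n ≥ p`, `α ∈ (0,1)` and
`β > 0` with `(n+p+1)α + mαβ/(2(1−α)) ≤ 2(m−p−1)β + 2(m/n)β`, the unbiased
estimate `2Δ̂` of (twice) the Kullback–Leibler risk difference of the pair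
`(Θ̂^G, Σ̂^{G2})` from `(X, S/n)` is nonpositive. -/
theorem stmt_17 (m n p : ℕ) (hp : 0 < p) (hmp : m ≥ p) (hn : n ≥ p)
    (α β : ℝ) (hα0 : 0 < α) (hα1 : α < 1) (hβ : 0 < β)
    (hαβ : ((n : ℝ) + p + 1) * α + (m : ℝ) * α * β / (2 * (1 - α))
      ≤ 2 * ((m : ℝ) - p - 1) * β + 2 * ((m : ℝ) / n) * β)
    (A B : ℝ) (hA : A = (n : ℝ) + p - 3) (hB : B = (m : ℝ) - p + 1)
    (f : Fin p → ℝ) (hfpos : ∀ i, 0 < f i) (hfdec : ∀ i j : Fin p, i < j → f j < f i)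
    (g : Fin p → ℝ) (hg : ∀ i, g i = 1 / (1 + β * f i))
    (d : Fin p → ℝ) (hd : ∀ i, d i = (n : ℝ) - p + 2 * ((i : ℕ) + 1) - 1) :
    (∑ i : Fin p,
        (α * g i * (4 * α * β * (f i * g i) ^ 2 + (α * A + 4 * β) * (f i * g i) - 2 * B)
          - 2 * ∑ j ∈ Finset.univ.erase i, α * g i ^ 2 * g j * ((α + β) * f i + 1)))
      + ((m : ℝ) / n) * ∑ i : Fin p,
          (-(d i) * α * g i - 2 * α * β * f i * g i ^ 2
            - 2 * α * β * ∑ j ∈ Finset.univ.filter (fun j => i < j), f j * g i * g j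
            - n * Real.log (1 - α * g i)) ≤ 0 := by
  have hP : (1 : ℝ) ≤ p := by exact_mod_cast hp
  have hPM : (p : ℝ) ≤ m := by exact_mod_cast hmp
  have hPN : (p : ℝ) ≤ n := by exact_mod_cast hn
  have hg0 : ∀ i, 0 < g i := fun i => by rw [hg i]; have := hfpos i; positivity
  have hmono : Monotone g := fun i j hij => by
    rw [hg i, hg j]
    gcongr
    · nlinarith [hfpos j]
    · exact (StrictAnti.antitone hfdec) hij
  rw [mul_sum, ← sum_add_distrib]
  calc _ ≤ ∑ i : Fin p, (m : ℝ) / n * α * ((n - d i) * g i) := sum_le_sum fun i _ =>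
        risk_summand_le hP hPM hPN hα0 hα1 hβ hαβ hA hB (hfpos i) (hg i)
          (sum_nonneg fun j _ => by have := hg0 j; have := hfpos i; positivity)
          (sum_nonneg fun j _ => by have := hg0 j; have := hg0 i; have := hfpos j; positivity)
    _ = (m : ℝ) / n * α * ∑ i : Fin p, ((p : ℝ) - 1 - 2 * (i : ℕ)) * g i := by
      rw [mul_sum]
      exact sum_congr rfl fun i _ => by rw [hd]; ring
    _ ≤ 0 := mul_nonpos_of_nonneg_of_nonpos (by positivity) hmono.sum_centered_index_mul_nonpos
end
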